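/- arXiv:2207.00333 — 3 statements merged into one kernel-verified Lean document; each statement's English description precedes it below -/
import Mathlib

section
/- Let γ = (u_i K_{ij} v_j) and γ* = (u*_i K_{ij} v*_j) be two scaled matrices with K ∈ ℝ^{d×d}_{>0}, v, v* ∈ ℝ^d_{>0}, and suppose both have the same strictly positive row sums. Define f_γ(i) := (∑_j γ_{ij}·j)/(∑_j γ_{ij}) - i, and let A := d_H(v, v*). Then for every i, e^{-A}·(f_{γ*}(i)+i) ≤ f_γ(i)+i ≤ e^A·(f_{γ*}(i)+i), and consequently |f_γ(i) - f_{γ*}(i)| ≤ d·(e^A - 1). -/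
/-!
Since `γ_ij = u_i K_ij v_j`, the quantity `f_γ(i) + i` is the centre of mass of the positions
`j` with weights `K_ij v_j`; the factor `u_i` cancels. Writing `v_j = e^{L_j} v*_j` with
`L_j = log v_j - log v*_j ∈ [m, M]`, the weights `K_ij v_j` lie between `e^m` and `e^M` times
the weights `K_ij v*_j`, so the two centres of mass differ by a factor in `[e^{-A}, e^A]`
with `A = M - m`. As both lie in `[1, d]`, their difference is at most `d (e^A - 1)`.
-/

open Finset Real

theorem Finset.centerMass_le_div_mul_centerMass {ι : Type*} {s : Finset ι} {w w' z : ι → ℝ}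
    {c C : ℝ} (hc : 0 < c) (hw' : ∀ j ∈ s, 0 ≤ w' j) (hs : 0 < ∑ j ∈ s, w' j)
    (hz : ∀ j ∈ s, 0 ≤ z j) (hlow : ∀ j ∈ s, c * w' j ≤ w j)
    (hup : ∀ j ∈ s, w j ≤ C * w' j) :
    s.centerMass w z ≤ C / c * s.centerMass w' z := by
  have hsum : c * ∑ j ∈ s, w' j ≤ ∑ j ∈ s, w j := by
    rw [mul_sum]; exact sum_le_sum hlow
  have hmass : ∑ j ∈ s, w j * z j ≤ C * ∑ j ∈ s, w' j * z j := by
    rw [mul_sum]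
    exact sum_le_sum fun j hj => by
      rw [← mul_assoc]; exact mul_le_mul_of_nonneg_right (hup j hj) (hz j hj)
  have hC : 0 ≤ C * ∑ j ∈ s, w' j * z j := hmass.trans' <| sum_nonneg fun j hj =>
    mul_nonneg ((mul_nonneg hc.le (hw' j hj)).trans (hlow j hj)) (hz j hj)
  simp only [centerMass, smul_eq_mul, ← div_eq_inv_mul]
  calc (∑ j ∈ s, w j * z j) / ∑ j ∈ s, w j
      ≤ (C * ∑ j ∈ s, w' j * z j) / (c * ∑ j ∈ s, w' j) :=
        div_le_div₀ hC hmass (mul_pos hc hs) hsum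
    _ = C / c * ((∑ j ∈ s, w' j * z j) / ∑ j ∈ s, w' j) := by
        rw [mul_div_mul_comm]

lemma sum_mul_div_sum_eq_centerMass {ι : Type*} [Fintype ι] {a : ℝ} {K v z : ι → ℝ}
    (h : ∑ j, a * K j * v j ≠ 0) :
    (∑ j, a * K j * v j * z j) / ∑ j, a * K j * v j =
      univ.centerMass (fun j => K j * v j) z := by
  have ha : a ≠ 0 := by rintro rfl; simp at h
  rw [← centerMass_smul_left (w := fun j => K j * v j) _ z ha]
  simp only [centerMass, Pi.smul_apply, smul_eq_mul, div_eq_inv_mul, mul_assoc]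

lemma abs_sub_le_mul_exp_sub_one {x y D A : ℝ} (hA : 0 ≤ A) (hy : 0 ≤ y) (hyD : y ≤ D)
    (hx : x ∈ Set.Icc (exp (-A) * y) (exp A * y)) : |x - y| ≤ D * (exp A - 1) := by
  have h1 : 0 ≤ exp A - 1 := by linarith [one_le_exp hA]
  have h2 : 1 - exp (-A) ≤ exp A - 1 := by linarith [add_one_le_exp A, add_one_le_exp (-A)]
  rw [abs_le]
  constructor <;> nlinarith [hx.1, hx.2]

noncomputable def hilbertDist {ι : Type*} (v w : ι → ℝ) : ℝ :=
  (⨆ j, (log (v j) - log (w j))) - ⨅ j, (log (v j) - log (w j))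

section HilbertDist

variable {ι : Type*} {v w : ι → ℝ}

lemma hilbertDist_nonneg [Finite ι] [Nonempty ι] : 0 ≤ hilbertDist v w :=
  sub_nonneg.2 <| ciInf_le_ciSup (Set.finite_range _).bddBelow (Set.finite_range _).bddAbove

lemma exp_log_sub_log_mul (hv : ∀ j, 0 < v j) (hw : ∀ j, 0 < w j) (j : ι) :
    exp (log (v j) - log (w j)) * w j = v j := by
  rw [exp_sub, exp_log (hv j), exp_log (hw j), div_mul_cancel₀ _ (hw j).ne']

theorem centerMass_mem_Icc_exp_hilbertDist [Fintype ι] [Nonempty ι] {K z : ι → ℝ}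
    (hK : ∀ j, 0 < K j) (hv : ∀ j, 0 < v j) (hw : ∀ j, 0 < w j) (hz : ∀ j, 0 ≤ z j) :
    univ.centerMass (fun j => K j * v j) z ∈
      Set.Icc (exp (-hilbertDist v w) * univ.centerMass (fun j => K j * w j) z)
        (exp (hilbertDist v w) * univ.centerMass (fun j => K j * w j) z) := by
  set L := fun j => log (v j) - log (w j)
  set M := ⨆ j, L j
  set m := ⨅ j, L j
  have hM (j : ι) : K j * v j ≤ exp M * (K j * w j) := by
    have h : v j ≤ exp M * w j := calc
      v j = exp (L j) * w j := (exp_log_sub_log_mul hv hw j).symm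
      _ ≤ exp M * w j := mul_le_mul_of_nonneg_right
        (exp_le_exp.2 (le_ciSup (Set.finite_range L).bddAbove j)) (hw j).le
    rw [mul_left_comm]
    exact mul_le_mul_of_nonneg_left h (hK j).le
  have hm (j : ι) : exp m * (K j * w j) ≤ K j * v j := by
    have h : exp m * w j ≤ v j := calc
      exp m * w j ≤ exp (L j) * w j := mul_le_mul_of_nonneg_right
        (exp_le_exp.2 (ciInf_le (Set.finite_range L).bddBelow j)) (hw j).le
      _ = v j := exp_log_sub_log_mul hv hw j
    rw [mul_left_comm]
    exact mul_le_mul_of_nonneg_left h (hK j).le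
  have hpos (x : ι → ℝ) (hx : ∀ j, 0 < x j) : 0 < ∑ j, K j * x j :=
    sum_pos (fun j _ => mul_pos (hK j) (hx j)) univ_nonempty
  have hA : exp (hilbertDist v w) = exp (-m) / exp (-M) := by
    rw [← exp_sub, neg_sub_neg]; rfl
  constructor
  · rw [exp_neg, inv_mul_le_iff₀ (exp_pos _), hA]
    refine centerMass_le_div_mul_centerMass (exp_pos (-M))
      (fun j _ => (mul_pos (hK j) (hv j)).le) (hpos v hv) (fun j _ => hz j) (fun j _ => ?_)
      (fun j _ => ?_)
    · rw [exp_neg, inv_mul_le_iff₀ (exp_pos M)]; exact hM j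
    · rw [exp_neg, le_inv_mul_iff₀ (exp_pos m)]; exact hm j
  · rw [hilbertDist, exp_sub]
    exact centerMass_le_div_mul_centerMass (exp_pos m)
      (fun j _ => (mul_pos (hK j) (hw j)).le) (hpos w hw) (fun j _ => hz j) (fun j _ => hm j)
      (fun j _ => hM j)

end HilbertDist

theorem stmt_10_general (d : ℕ) (K : Fin d → Fin d → ℝ) (hK : ∀ i j, 0 < K i j)
    (u ustar v vstar : Fin d → ℝ)
    (hv : ∀ j, 0 < v j) (hvstar : ∀ j, 0 < vstar j)
    (γ γstar : Fin d → Fin d → ℝ)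
    (hγ : γ = fun i j => u i * K i j * v j)
    (hγstar : γstar = fun i j => ustar i * K i j * vstar j)
    (hrowpos : ∀ i, 0 < ∑ j, γ i j)
    (hrow : ∀ i, ∑ j, γ i j = ∑ j, γstar i j)
    (f fstar : Fin d → ℝ)
    (hf : f = fun i => (∑ j, γ i j * ((j : ℝ) + 1)) / (∑ j, γ i j) - ((i : ℝ) + 1))
    (hfstar : fstar = fun i =>
      (∑ j, γstar i j * ((j : ℝ) + 1)) / (∑ j, γstar i j) - ((i : ℝ) + 1))
    (A : ℝ)
    (hA : A = (⨆ j, (Real.log (v j) - Real.log (vstar j)))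
            - ⨅ j, (Real.log (v j) - Real.log (vstar j))) :
    (∀ i, Real.exp (-A) * (fstar i + ((i : ℝ) + 1)) ≤ f i + ((i : ℝ) + 1) ∧
          f i + ((i : ℝ) + 1) ≤ Real.exp A * (fstar i + ((i : ℝ) + 1))) ∧
    (∀ i, |f i - fstar i| ≤ d * (Real.exp A - 1)) := by
  obtain rfl : A = hilbertDist v vstar := hA
  subst hγ hγstar hf hfstar
  simp only [sub_add_cancel, sub_sub_sub_cancel_right] at hrowpos hrow ⊢
  set z : Fin d → ℝ := fun j => (j : ℝ) + 1
  have hmean (i : Fin d) := sum_mul_div_sum_eq_centerMass (z := z) (hrowpos i).ne'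
  have hmean' (i : Fin d) := sum_mul_div_sum_eq_centerMass (z := z) (hrow i ▸ hrowpos i).ne'
  have hbounds (i : Fin d) :=
    have : Nonempty (Fin d) := ⟨i⟩
    centerMass_mem_Icc_exp_hilbertDist (z := z) (hK i) hv hvstar (fun j => by positivity)
  refine ⟨fun i => ?_, fun i => ?_⟩
  · rw [hmean, hmean']
    exact hbounds i
  · have : Nonempty (Fin d) := ⟨i⟩
    obtain ⟨hnonneg, hle⟩ := (convex_Icc 0 (d : ℝ)).centerMass_mem (z := z)
      (fun j _ => (mul_pos (hK i j) (hvstar j)).le)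
      (sum_pos (fun j _ => mul_pos (hK i j) (hvstar j)) univ_nonempty)
      (fun j _ => ⟨by positivity, show (j : ℝ) + 1 ≤ d by exact_mod_cast j.isLt⟩)
    rw [hmean, hmean']
    exact abs_sub_le_mul_exp_sub_one hilbertDist_nonneg hnonneg hle (hbounds i)

/-- Stability of the associated disparity-type function under perturbation of the
scaling vector `v`, quantified by the Hilbert metric `A = d_H(v, v*)`. -/
theorem stmt_10 (d : ℕ) (hd : 0 < d) (K : Fin d → Fin d → ℝ) (hK : ∀ i j, 0 < K i j)
    (u ustar v vstar : Fin d → ℝ)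
    (hv : ∀ j, 0 < v j) (hvstar : ∀ j, 0 < vstar j)
    (γ γstar : Fin d → Fin d → ℝ)
    (hγ : γ = fun i j => u i * K i j * v j)
    (hγstar : γstar = fun i j => ustar i * K i j * vstar j)
    (hrowpos : ∀ i, 0 < ∑ j, γ i j)
    (hrow : ∀ i, ∑ j, γ i j = ∑ j, γstar i j)
    (f fstar : Fin d → ℝ)
    (hf : f = fun i => (∑ j, γ i j * ((j : ℝ) + 1)) / (∑ j, γ i j) - ((i : ℝ) + 1))
    (hfstar : fstar = fun i =>
      (∑ j, γstar i j * ((j : ℝ) + 1)) / (∑ j, γstar i j) - ((i : ℝ) + 1))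
    (A : ℝ)
    (hA : A = (⨆ j, (Real.log (v j) - Real.log (vstar j)))
            - ⨅ j, (Real.log (v j) - Real.log (vstar j))) :
    (∀ i, Real.exp (-A) * (fstar i + ((i : ℝ) + 1)) ≤ f i + ((i : ℝ) + 1) ∧
          f i + ((i : ℝ) + 1) ≤ Real.exp A * (fstar i + ((i : ℝ) + 1))) ∧
    (∀ i, |f i - fstar i| ≤ d * (Real.exp A - 1)) :=
  stmt_10_general d K hK u ustar v vstar hv hvstar γ γstar hγ hγstar hrowpos hrow f fstar hf hfstar
    A hA
end

section
/- Let ν₀ have total mass m₀ > 1, ν₁ a probability vector, both strictly positive on {1,…,d}, and let ν̃₀ := ν₀/m₀. Initialize γ^{(0)} := α for a strictly positive matrix α and alternate KL projections γ^{(2k+1)} := Proj^{KL}_{C¹_{ν₀}}(γ^{(2k)}), γ^{(2k+2)} := Proj^{KL}_{C²_{ν₁}}(γ^{(2k+1)}). Then the even subsequence (γ^{(2k)}) converges to Proj^{KL}_{Π(ν̃₀,ν₁)}(α) and the odd subsequence (γ^{(2k+1)}) converges to m₀ · Proj^{KL}_{Π(ν̃₀,ν₁)}(α); in particular the two subsequences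 converge to distinct limits whose ratio is the constant m₀. -/
/-!
Scaling the rows to `ν₀ = m₀ • ν̃₀` instead of `ν̃₀` only multiplies the matrix by `m₀`, and the
following column scaling removes that factor. Hence the even iterates are the Sinkhorn iterates
for the balanced pair `(ν̃₀, ν₁)`, and each odd iterate is `m₀` times the corresponding
`ν̃₀`-row-scaled matrix.

Every Sinkhorn iterate has the form `diag(u_k) α diag(v_{k+1})`. One Sinkhorn step replaces the
ratios `v_{k+1}/v_k` by two successive weighted means of themselves. Positivity of `α` keeps
every weight above a fixed fraction `δ` of the total, so the oscillation `max - min` of these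
ratios contracts by the factor `1 - δ`. Therefore `log` of the iterates is Cauchy, and the iterates
converge to a positive `G`. By continuity `G` is a fixed point of the Sinkhorn step, and this forces
its marginals to be `(ν̃₀, ν₁)`. Cross ratios pass to the limit, so `G = diag(p) α diag(q)`. Then
`KL(γ|α) = KL(γ|G) + ∑ ν̃₀ log p + ∑ ν₁ log q` for every coupling `γ`, and Gibbs' inequality
`KL(γ|G) ≥ 0` shows that `G` is the KL projection.
-/

open Filter Finset Real Topology

section Elementary

variable {ι : Type*}

theorem add_mul_sub_le_sum_div_sum {s : Finset ι} {x y : ι → ℝ} {m δ : ℝ}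
    (hx : ∀ i ∈ s, 0 < x i) (hm : ∀ i ∈ s, m ≤ y i / x i)
    (hδ : ∀ i ∈ s, δ * ∑ i' ∈ s, x i' ≤ x i) {i₁ : ι} (hi₁ : i₁ ∈ s) :
    m + δ * (y i₁ / x i₁ - m) ≤ (∑ i ∈ s, y i) / ∑ i ∈ s, x i := by
  have hexcess : ∀ i ∈ s, 0 ≤ x i * (y i / x i - m) :=
    fun i hi => mul_nonneg (hx i hi).le (sub_nonneg.2 (hm i hi))
  rw [le_div_iff₀ (sum_pos hx ⟨i₁, hi₁⟩)]
  calc (m + δ * (y i₁ / x i₁ - m)) * ∑ i ∈ s, x i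
      = m * ∑ i ∈ s, x i + δ * (∑ i ∈ s, x i) * (y i₁ / x i₁ - m) := by ring
    _ ≤ m * ∑ i ∈ s, x i + x i₁ * (y i₁ / x i₁ - m) := by
        gcongr
        exacts [sub_nonneg.2 (hm i₁ hi₁), hδ i₁ hi₁]
    _ ≤ m * ∑ i ∈ s, x i + ∑ i ∈ s, x i * (y i / x i - m) := by
        gcongr
        exact single_le_sum hexcess hi₁
    _ = ∑ i ∈ s, y i := by
        rw [mul_sum, ← sum_add_distrib]
        exact sum_congr rfl fun i hi => by field_simp [(hx i hi).ne']; ring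

theorem sum_div_sum_le_sub_mul_sub {s : Finset ι} {x y : ι → ℝ} {M δ : ℝ}
    (hx : ∀ i ∈ s, 0 < x i) (hM : ∀ i ∈ s, y i / x i ≤ M)
    (hδ : ∀ i ∈ s, δ * ∑ i' ∈ s, x i' ≤ x i) {i₀ : ι} (hi₀ : i₀ ∈ s) :
    (∑ i ∈ s, y i) / ∑ i ∈ s, x i ≤ M - δ * (M - y i₀ / x i₀) := by
  have := add_mul_sub_le_sum_div_sum (y := fun i => -y i) (m := -M) hx
    (fun i hi => by rw [neg_div]; exact neg_le_neg (hM i hi)) hδ hi₀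
  simp only [sum_neg_distrib, neg_div] at this
  linarith

theorem sum_div_sum_mem_Icc {X : Type*} [Fintype X] [Nonempty X] {x y : X → ℝ}
    (hx : ∀ i, 0 < x i) {δ : ℝ} (hδ : ∀ i, δ * ∑ i', x i' ≤ x i) :
    (∑ i, y i) / ∑ i, x i ∈ Set.Icc
      ((⨅ i, y i / x i) + δ * ((⨆ i, y i / x i) - ⨅ i, y i / x i))
      ((⨆ i, y i / x i) - δ * ((⨆ i, y i / x i) - ⨅ i, y i / x i)) := by
  have hbdd := Set.finite_range fun i => y i / x i
  obtain ⟨i₀, hi₀⟩ := exists_eq_ciInf_of_finite (f := fun i => y i / x i)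
  obtain ⟨i₁, hi₁⟩ := exists_eq_ciSup_of_finite (f := fun i => y i / x i)
  constructor
  · rw [← hi₁]
    exact add_mul_sub_le_sum_div_sum (fun i _ => hx i) (fun i _ => ciInf_le hbdd.bddBelow i)
      (fun i _ => hδ i) (mem_univ i₁)
  · rw [← hi₀]
    exact sum_div_sum_le_sub_mul_sub (fun i _ => hx i) (fun i _ => le_ciSup hbdd.bddAbove i)
      (fun i _ => hδ i) (mem_univ i₀)

theorem abs_log_sub_log_le {m M x y : ℝ} (hm : 0 < m) (hx : x ∈ Set.Icc m M)
    (hy : y ∈ Set.Icc m M) : |log x - log y| ≤ (M - m) / m := by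
  have key : ∀ x y, x ∈ Set.Icc m M → y ∈ Set.Icc m M → log x - log y ≤ (M - m) / m := by
    rintro x y ⟨hmx, hxM⟩ ⟨hmy, hyM⟩
    have hx0 : 0 < x := hm.trans_le hmx
    have hy0 : 0 < y := hm.trans_le hmy
    calc log x - log y = log (x / y) := (log_div hx0.ne' hy0.ne').symm
      _ ≤ x / y - 1 := log_le_sub_one_of_pos (div_pos hx0 hy0)
      _ ≤ M / m - 1 := by gcongr; linarith
      _ = (M - m) / m := by field_simp
  rw [abs_le]
  exact ⟨by linarith [key y x hy hx], key x y hx hy⟩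

theorem sub_le_mul_log_div {t s : ℝ} (ht : 0 ≤ t) (hs : 0 < s) : t - s ≤ t * log (t / s) := by
  have h := mul_nonneg hs.le (InformationTheory.klFun_nonneg (div_nonneg ht hs.le))
  rw [InformationTheory.klFun_apply] at h
  have : s * (t / s * log (t / s) + 1 - t / s) = t * log (t / s) + s - t := by
    field_simp
  linarith

theorem exists_pos_mul_le_of_pos {X : Type*} [Finite X] [Nonempty X] {f : X → ℝ}
    (hf : ∀ x, 0 < f x) : ∃ c, 0 < c ∧ c ≤ 1 ∧ ∀ x y, c * f y ≤ f x := by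
  obtain ⟨p, hp⟩ := exists_eq_ciInf_of_finite (f := fun p : X × X => f p.1 / f p.2)
  refine ⟨⨅ p : X × X, f p.1 / f p.2, ?_, ?_, fun x y => ?_⟩
  · rw [← hp]; exact div_pos (hf _) (hf _)
  · obtain ⟨x⟩ := ‹Nonempty X›
    calc _ ≤ f x / f x := ciInf_le (Set.finite_range _).bddBelow (x, x)
      _ = 1 := div_self (hf x).ne'
  · rw [← le_div_iff₀ (hf y)]
    exact ciInf_le (Set.finite_range _).bddBelow (x, y)

end Elementary

section Alternating

variable {X : Type*} {f g : X → X} {x : ℕ → X}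

theorem alternating_odd (h : ∀ k, x (k + 1) = if Even k then f (x k) else g (x k)) (k : ℕ) :
    x (2 * k + 1) = f (x (2 * k)) := by
  rw [h, if_pos (even_two_mul k)]

theorem alternating_even (h : ∀ k, x (k + 1) = if Even k then f (x k) else g (x k)) (k : ℕ) :
    x (2 * k) = (g ∘ f)^[k] (x 0) := by
  induction k with
  | zero => rfl
  | succ k ih =>
    rw [Function.iterate_succ_apply', ← ih, Function.comp_apply, ← alternating_odd h,
      mul_add, mul_one, h, if_neg (Nat.not_even_iff_odd.2 (odd_two_mul_add_one k))]

end Alternating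

noncomputable section

section Scaling

variable {ι κ : Type*}

def rowScale [Fintype κ] (r : ι → ℝ) (γ : ι → κ → ℝ) : ι → κ → ℝ :=
  fun i j => r i * γ i j / ∑ j', γ i j'

def colScale [Fintype ι] (c : κ → ℝ) (γ : ι → κ → ℝ) : ι → κ → ℝ :=
  fun i j => c j * γ i j / ∑ i', γ i' j

def sinkhornStep [Fintype ι] [Fintype κ] (r : ι → ℝ) (c : κ → ℝ) (γ : ι → κ → ℝ) :
    ι → κ → ℝ :=
  colScale c (rowScale r γ)

def diagScale (p : ι → ℝ) (α : ι → κ → ℝ) (q : κ → ℝ) : ι → κ → ℝ :=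
  fun i j => p i * α i j * q j

def IsDiagScaling (α γ : ι → κ → ℝ) : Prop :=
  ∃ p q, (∀ i, 0 < p i) ∧ (∀ j, 0 < q j) ∧ γ = diagScale p α q

def rowPot [Fintype κ] (α : ι → κ → ℝ) (r : ι → ℝ) (q : κ → ℝ) : ι → ℝ :=
  fun i => r i / ∑ j, α i j * q j

def colPot [Fintype ι] (α : ι → κ → ℝ) (c : κ → ℝ) (p : ι → ℝ) : κ → ℝ :=
  fun j => c j / ∑ i, p i * α i j

variable {α γ : ι → κ → ℝ} {r p : ι → ℝ} {c q : κ → ℝ}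

section Rows

variable [Fintype κ]

theorem sum_rowScale {i : ι} (h : ∑ j, γ i j ≠ 0) : ∑ j, rowScale r γ i j = r i := by
  simp only [rowScale, ← sum_div, ← mul_sum]
  exact mul_div_cancel_right₀ _ h

theorem rowScale_eq_self (h : ∀ i, ∑ j, γ i j = r i) (hr : ∀ i, r i ≠ 0) :
    rowScale r γ = γ := by
  funext i j
  rw [rowScale, h i]
  field_simp [hr i]

theorem rowScale_smul (t : ℝ) : rowScale (t • r) γ = t • rowScale r γ := by
  funext i j
  simp only [rowScale, Pi.smul_apply, smul_eq_mul]
  ring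

theorem rowScale_diagScale (hp : ∀ i, p i ≠ 0) :
    rowScale r (diagScale p α q) = diagScale (rowPot α r q) α q := by
  funext i j
  simp only [rowScale, diagScale, rowPot]
  rw [show ∑ j', p i * α i j' * q j' = p i * ∑ j', α i j' * q j' by
    rw [mul_sum]; exact sum_congr rfl fun _ _ => by ring]
  by_cases h : ∑ j', α i j' * q j' = 0
  · simp [h]
  · field_simp [hp i]

theorem continuousAt_rowScale (h : ∀ i, ∑ j, γ i j ≠ 0) : ContinuousAt (rowScale r) γ := by
  refine continuousAt_pi.2 fun i => continuousAt_pi.2 fun j => ?_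
  exact ContinuousAt.div (Continuous.continuousAt (by fun_prop))
    (continuous_finsetSum _ fun _ _ => by fun_prop).continuousAt (h i)

theorem rowPot_pos [Nonempty κ] (hα : ∀ i j, 0 < α i j) (hr : ∀ i, 0 < r i) {q : κ → ℝ}
    (hq : ∀ j, 0 < q j) (i : ι) : 0 < rowPot α r q i :=
  div_pos (hr i) (sum_pos (fun j _ => mul_pos (hα i j) (hq j)) univ_nonempty)

theorem rowPot_div_rowPot_mem [Nonempty κ] (hα : ∀ i j, 0 < α i j) (hr : ∀ i, 0 < r i)
    {v w : κ → ℝ} (hv : ∀ j, 0 < v j) (hw : ∀ j, 0 < w j) {δ : ℝ}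
    (hδ : ∀ i j, δ * ∑ j', α i j' * v j' ≤ α i j * v j) (i : ι) :
    rowPot α r v i / rowPot α r w i ∈ Set.Icc
      ((⨅ j, w j / v j) + δ * ((⨆ j, w j / v j) - ⨅ j, w j / v j))
      ((⨆ j, w j / v j) - δ * ((⨆ j, w j / v j) - ⨅ j, w j / v j)) := by
  have hratio : ∀ j, α i j * w j / (α i j * v j) = w j / v j :=
    fun j => mul_div_mul_left _ _ (hα i j).ne'
  have hsum : ∀ q : κ → ℝ, (∀ j, 0 < q j) → ∑ j, α i j * q j ≠ 0 :=
    fun q hq => (sum_pos (fun j _ => mul_pos (hα i j) (hq j)) univ_nonempty).ne'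
  have key := sum_div_sum_mem_Icc (y := fun j => α i j * w j)
    (fun j => mul_pos (hα i j) (hv j)) (hδ i)
  simp only [hratio] at key
  convert key using 1
  simp only [rowPot]
  field_simp [(hr i).ne', hsum v hv, hsum w hw]

end Rows

section Columns

variable [Fintype ι]

theorem sum_colScale {j : κ} (h : ∑ i, γ i j ≠ 0) : ∑ i, colScale c γ i j = c j := by
  simp only [colScale, ← sum_div, ← mul_sum]
  exact mul_div_cancel_right₀ _ h

theorem colScale_smul {t : ℝ} (ht : t ≠ 0) : colScale c (t • γ) = colScale c γ := by
  funext i j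
  simp only [colScale, Pi.smul_apply, smul_eq_mul, ← mul_sum]
  by_cases h : ∑ i', γ i' j = 0
  · simp [h]
  · field_simp

theorem colScale_diagScale (hq : ∀ j, q j ≠ 0) :
    colScale c (diagScale p α q) = diagScale p α (colPot α c p) := by
  funext i j
  simp only [colScale, diagScale, colPot]
  rw [show ∑ i', p i' * α i' j * q j = (∑ i', p i' * α i' j) * q j by rw [sum_mul]]
  by_cases h : ∑ i', p i' * α i' j = 0
  · simp [h]
  · field_simp [hq j]

theorem continuousAt_colScale (h : ∀ j, ∑ i, γ i j ≠ 0) : ContinuousAt (colScale c) γ := by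
  refine continuousAt_pi.2 fun i => continuousAt_pi.2 fun j => ?_
  exact ContinuousAt.div (Continuous.continuousAt (by fun_prop))
    (continuous_finsetSum _ fun _ _ => by fun_prop).continuousAt (h j)

theorem colPot_pos [Nonempty ι] (hα : ∀ i j, 0 < α i j) (hc : ∀ j, 0 < c j) {p : ι → ℝ}
    (hp : ∀ i, 0 < p i) (j : κ) : 0 < colPot α c p j :=
  div_pos (hc j) (sum_pos (fun i _ => mul_pos (hp i) (hα i j)) univ_nonempty)

theorem colPot_div_colPot_mem [Nonempty ι] (hα : ∀ i j, 0 < α i j) (hc : ∀ j, 0 < c j)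
    {p p' : ι → ℝ} (hp : ∀ i, 0 < p i) (hp' : ∀ i, 0 < p' i) (j : κ) :
    colPot α c p' j / colPot α c p j ∈ Set.Icc (⨅ i, p i / p' i) (⨆ i, p i / p' i) := by
  have hratio : ∀ i, p i * α i j / (p' i * α i j) = p i / p' i :=
    fun i => mul_div_mul_right _ _ (hα i j).ne'
  have hsum : ∀ q : ι → ℝ, (∀ i, 0 < q i) → ∑ i, q i * α i j ≠ 0 :=
    fun q hq => (sum_pos (fun i _ => mul_pos (hq i) (hα i j)) univ_nonempty).ne'
  have key := sum_div_sum_mem_Icc (y := fun i => p i * α i j) (δ := 0)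
    (fun i => mul_pos (hp' i) (hα i j)) (fun i => by
      simpa using (mul_pos (hp' i) (hα i j)).le)
  simp only [hratio, zero_mul, add_zero, sub_zero] at key
  convert key using 1
  simp only [colPot]
  field_simp [(hc j).ne', hsum p hp, hsum p' hp']

theorem mul_colPot_le [Nonempty ι] (hα : ∀ i j, 0 < α i j) (hc : ∀ j, 0 < c j) {θ β : ℝ}
    (hθ : 0 ≤ θ) (hαθ : ∀ i j j', θ * α i j ≤ α i j')
    (hcβ : ∀ j j', β * c j' ≤ c j) {p : ι → ℝ} (hp : ∀ i, 0 < p i) (j j' : κ) :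
    β * θ * colPot α c p j' ≤ colPot α c p j := by
  have hS : ∀ j, 0 < ∑ i, p i * α i j :=
    fun j => sum_pos (fun i _ => mul_pos (hp i) (hα i j)) univ_nonempty
  have hsum : θ * ∑ i, p i * α i j ≤ ∑ i, p i * α i j' := by
    rw [mul_sum]
    exact sum_le_sum fun i _ => by
      rw [mul_left_comm]; exact mul_le_mul_of_nonneg_left (hαθ i j j') (hp i).le
  simp only [colPot]
  rw [mul_div_assoc', div_le_div_iff₀ (hS j') (hS j)]
  calc β * θ * c j' * ∑ i, p i * α i j = (β * c j') * (θ * ∑ i, p i * α i j) := by ring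
    _ ≤ c j * ∑ i, p i * α i j' :=
        mul_le_mul (hcβ j j') hsum (mul_nonneg hθ (hS j).le) (hc j).le

end Columns

variable [Fintype ι] [Fintype κ]

theorem sinkhornStep_smul {t : ℝ} (ht : t ≠ 0) :
    sinkhornStep (t • r) c = sinkhornStep r c := by
  funext γ
  rw [sinkhornStep, sinkhornStep, rowScale_smul, colScale_smul ht]

theorem sinkhornStep_diagScale (hp : ∀ i, p i ≠ 0)
    (hq : ∀ j, q j ≠ 0) :
    sinkhornStep r c (diagScale p α q) =
      diagScale (rowPot α r q) α (colPot α c (rowPot α r q)) := by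
  rw [sinkhornStep, rowScale_diagScale hp, colScale_diagScale hq]

theorem continuousAt_sinkhornStep [Nonempty ι] [Nonempty κ] (hr : ∀ i, 0 < r i)
    (hγ : ∀ i j, 0 < γ i j) : ContinuousAt (sinkhornStep r c) γ := by
  have hR : ∀ i, 0 < ∑ j, γ i j := fun i => sum_pos (fun j _ => hγ i j) univ_nonempty
  refine (continuousAt_colScale fun j => (sum_pos (fun i _ => ?_) univ_nonempty).ne').comp
    (continuousAt_rowScale fun i => (hR i).ne')
  exact div_pos (mul_pos (hr i) (hγ i j)) (hR i)

end Scaling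

section DiagScaling

variable {ι κ : Type*} {α γ G : ι → κ → ℝ}

theorem IsDiagScaling.cross_mul_eq (h : IsDiagScaling α γ) (i i' : ι) (j j' : κ) :
    γ i j * γ i' j' * (α i j' * α i' j) = γ i j' * γ i' j * (α i j * α i' j') := by
  obtain ⟨p, q, -, -, rfl⟩ := h
  simp only [diagScale]
  ring

theorem isDiagScaling_of_cross_mul_eq (hα : ∀ i j, 0 < α i j) (hγ : ∀ i j, 0 < γ i j)
    (i₀ : ι) (j₀ : κ)
    (h : ∀ i j, γ i j * γ i₀ j₀ * (α i j₀ * α i₀ j) = γ i j₀ * γ i₀ j * (α i j * α i₀ j₀)) :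
    IsDiagScaling α γ := by
  refine ⟨fun i => γ i j₀ / α i j₀, fun j => γ i₀ j * α i₀ j₀ / (α i₀ j * γ i₀ j₀),
    fun i => div_pos (hγ i j₀) (hα i j₀),
    fun j => div_pos (mul_pos (hγ i₀ j) (hα i₀ j₀)) (mul_pos (hα i₀ j) (hγ i₀ j₀)), ?_⟩
  funext i j
  have := (hα i j₀).ne'; have := (hα i₀ j).ne'; have := (hγ i₀ j₀).ne'
  simp only [diagScale]
  field_simp
  linear_combination h i j

theorem isDiagScaling_of_tendsto [Nonempty ι] [Nonempty κ] {E : ℕ → ι → κ → ℝ}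
    (hα : ∀ i j, 0 < α i j) (hG : ∀ i j, 0 < G i j) (hE : ∀ k, IsDiagScaling α (E k))
    (hlim : Tendsto E atTop (𝓝 G)) : IsDiagScaling α G := by
  obtain ⟨i₀⟩ := ‹Nonempty ι›
  obtain ⟨j₀⟩ := ‹Nonempty κ›
  refine isDiagScaling_of_cross_mul_eq hα hG i₀ j₀ fun i j => ?_
  have hclosed : IsClosed {M : ι → κ → ℝ |
      M i j * M i₀ j₀ * (α i j₀ * α i₀ j) = M i j₀ * M i₀ j * (α i j * α i₀ j₀)} :=
    isClosed_eq (by fun_prop) (by fun_prop)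
  exact hclosed.mem_of_tendsto hlim (Eventually.of_forall fun k => (hE k).cross_mul_eq i i₀ j j₀)

end DiagScaling

section KL

variable {ι κ : Type*} [Fintype ι] [Fintype κ] {α γ G : ι → κ → ℝ}

-- With Lean's `log 0 = 0`, zero entries of `γ` contribute `0`, as in the convention `0 log 0 = 0`.
def klDiv (γ β : ι → κ → ℝ) : ℝ :=
  ∑ i, ∑ j, γ i j * log (γ i j / β i j)

theorem sub_le_klDiv (hγ : ∀ i j, 0 ≤ γ i j) (hG : ∀ i j, 0 < G i j) :
    ∑ i, ∑ j, γ i j - ∑ i, ∑ j, G i j ≤ klDiv γ G := by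
  rw [← sum_sub_distrib]
  exact sum_le_sum fun i _ => by
    rw [← sum_sub_distrib]
    exact sum_le_sum fun j _ => sub_le_mul_log_div (hγ i j) (hG i j)

theorem klDiv_eq_add_of_diagScale {p : ι → ℝ} {q : κ → ℝ} (hα : ∀ i j, 0 < α i j)
    (hp : ∀ i, 0 < p i) (hq : ∀ j, 0 < q j) (hγ : ∀ i j, 0 ≤ γ i j) :
    klDiv γ α = klDiv γ (diagScale p α q) + ∑ i, (∑ j, γ i j) * log (p i) +
      ∑ j, (∑ i, γ i j) * log (q j) := by
  have hentry : ∀ i j, γ i j * log (γ i j / α i j) = γ i j * log (γ i j / diagScale p α q i j) +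
      γ i j * log (p i) + γ i j * log (q j) := fun i j => by
    rcases (hγ i j).eq_or_lt with h | h
    · simp [← h]
    have hpq := mul_pos (mul_pos (hp i) (hα i j)) (hq j)
    rw [← mul_add, ← mul_add]
    congr 1
    simp only [diagScale]
    rw [← log_mul (div_pos h hpq).ne' (hp i).ne',
      ← log_mul (mul_pos (div_pos h hpq) (hp i)).ne' (hq j).ne']
    congr 1
    field_simp [(hp i).ne', (hq j).ne', (hα i j).ne']
  simp only [klDiv, hentry, sum_add_distrib, sum_mul]
  rw [sum_comm (f := fun i j => γ i j * log (q j))]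

theorem klDiv_le_of_isDiagScaling (hα : ∀ i j, 0 < α i j) (hG : IsDiagScaling α G)
    (hγ : ∀ i j, 0 ≤ γ i j) (hrow : ∀ i, ∑ j, γ i j = ∑ j, G i j)
    (hcol : ∀ j, ∑ i, γ i j = ∑ i, G i j) : klDiv G α ≤ klDiv γ α := by
  obtain ⟨p, q, hp, hq, rfl⟩ := hG
  have hpos : ∀ i j, 0 < diagScale p α q i j := fun i j =>
    mul_pos (mul_pos (hp i) (hα i j)) (hq j)
  have hself : klDiv (diagScale p α q) (diagScale p α q) = 0 := by
    simp [klDiv, div_self (hpos _ _).ne']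
  have hgibbs := sub_le_klDiv hγ hpos
  rw [sum_congr rfl fun i _ => hrow i, sub_self] at hgibbs
  rw [klDiv_eq_add_of_diagScale hα hp hq hγ, klDiv_eq_add_of_diagScale hα hp hq
    (fun i j => (hpos i j).le), hself]
  simp only [hrow, hcol]
  linarith

end KL

section SinkhornPotentials

variable {ι κ : Type*} [Fintype ι] [Fintype κ] {α : ι → κ → ℝ} {a : ι → ℝ} {b : κ → ℝ}

def sinkhornPot (α : ι → κ → ℝ) (a : ι → ℝ) (b : κ → ℝ) (k : ℕ) : κ → ℝ :=
  (fun q => colPot α b (rowPot α a q))^[k] 1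

theorem sinkhornPot_succ (k : ℕ) :
    sinkhornPot α a b (k + 1) = colPot α b (rowPot α a (sinkhornPot α a b k)) :=
  Function.iterate_succ_apply' _ _ _

theorem sinkhornPot_pos [Nonempty ι] [Nonempty κ] (hα : ∀ i j, 0 < α i j)
    (ha : ∀ i, 0 < a i) (hb : ∀ j, 0 < b j) (k : ℕ) (j : κ) : 0 < sinkhornPot α a b k j := by
  induction k generalizing j with
  | zero => exact one_pos
  | succ k ih =>
    rw [sinkhornPot_succ]
    exact colPot_pos hα hb (rowPot_pos hα ha ih) j

theorem sinkhornStep_iterate_succ [Nonempty ι] [Nonempty κ] (hα : ∀ i j, 0 < α i j)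
    (ha : ∀ i, 0 < a i) (hb : ∀ j, 0 < b j) (k : ℕ) :
    (sinkhornStep a b)^[k + 1] α =
      diagScale (rowPot α a (sinkhornPot α a b k)) α (sinkhornPot α a b (k + 1)) := by
  induction k with
  | zero =>
    have hα1 : α = diagScale (fun _ => 1) α (fun _ => 1) := by funext i j; simp [diagScale]
    calc sinkhornStep a b α = sinkhornStep a b (diagScale (fun _ => 1) α (fun _ => 1)) := by
          rw [← hα1]
      _ = _ := sinkhornStep_diagScale (fun _ => one_ne_zero) (fun _ => one_ne_zero)
  | succ k ih =>
    rw [Function.iterate_succ_apply', ih, sinkhornStep_diagScale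
      (fun i => (rowPot_pos hα ha (sinkhornPot_pos hα ha hb k) i).ne')
      (fun j => (sinkhornPot_pos hα ha hb (k + 1) j).ne'), ← sinkhornPot_succ]

theorem sinkhornStep_iterate_succ_pos [Nonempty ι] [Nonempty κ] (hα : ∀ i j, 0 < α i j)
    (ha : ∀ i, 0 < a i) (hb : ∀ j, 0 < b j) (k : ℕ) (i : ι) (j : κ) :
    0 < (sinkhornStep a b)^[k + 1] α i j := by
  rw [sinkhornStep_iterate_succ hα ha hb]
  exact mul_pos (mul_pos (rowPot_pos hα ha (sinkhornPot_pos hα ha hb k) i) (hα i j))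
    (sinkhornPot_pos hα ha hb (k + 1) j)

theorem isDiagScaling_sinkhornStep_iterate [Nonempty ι] [Nonempty κ] (hα : ∀ i j, 0 < α i j)
    (ha : ∀ i, 0 < a i) (hb : ∀ j, 0 < b j) (k : ℕ) :
    IsDiagScaling α ((sinkhornStep a b)^[k] α) := by
  cases k with
  | zero => exact ⟨1, 1, fun _ => one_pos, fun _ => one_pos, by funext i j; simp [diagScale]⟩
  | succ k =>
    exact ⟨_, _, rowPot_pos hα ha (sinkhornPot_pos hα ha hb k), sinkhornPot_pos hα ha hb (k + 1),
      sinkhornStep_iterate_succ hα ha hb k⟩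

def potRatio (α : ι → κ → ℝ) (a : ι → ℝ) (b : κ → ℝ) (k : ℕ) (j : κ) : ℝ :=
  sinkhornPot α a b (k + 1) j / sinkhornPot α a b k j

def ratioInf (α : ι → κ → ℝ) (a : ι → ℝ) (b : κ → ℝ) (k : ℕ) : ℝ := ⨅ j, potRatio α a b k j

def ratioSup (α : ι → κ → ℝ) (a : ι → ℝ) (b : κ → ℝ) (k : ℕ) : ℝ := ⨆ j, potRatio α a b k j

theorem ratioInf_le_ratioSup [Nonempty κ] (k : ℕ) : ratioInf α a b k ≤ ratioSup α a b k :=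
  ciInf_le_ciSup (Set.finite_range _).bddBelow (Set.finite_range _).bddAbove

theorem ratioInf_pos [Nonempty ι] [Nonempty κ] (hα : ∀ i j, 0 < α i j) (ha : ∀ i, 0 < a i)
    (hb : ∀ j, 0 < b j) (k : ℕ) : 0 < ratioInf α a b k := by
  obtain ⟨j, hj⟩ := exists_eq_ciInf_of_finite (f := potRatio α a b k)
  rw [ratioInf, ← hj]
  exact div_pos (sinkhornPot_pos hα ha hb _ j) (sinkhornPot_pos hα ha hb k j)

theorem exists_mul_sinkhornPot_le [Nonempty ι] [Nonempty κ] (hα : ∀ i j, 0 < α i j)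
    (ha : ∀ i, 0 < a i) (hb : ∀ j, 0 < b j) :
    ∃ c, 0 < c ∧ c ≤ 1 ∧ ∀ k j j', c * sinkhornPot α a b k j' ≤ sinkhornPot α a b k j := by
  obtain ⟨θ, hθ, hθ1, hαθ⟩ := exists_pos_mul_le_of_pos (f := fun x : ι × κ => α x.1 x.2)
    fun x => hα x.1 x.2
  obtain ⟨β, hβ, hβ1, hbβ⟩ := exists_pos_mul_le_of_pos hb
  refine ⟨β * θ, mul_pos hβ hθ, mul_le_one₀ hβ1 hθ.le hθ1, fun k j j' => ?_⟩
  cases k with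
  | zero => simpa [sinkhornPot] using mul_le_one₀ hβ1 hθ.le hθ1
  | succ k =>
    rw [sinkhornPot_succ]
    exact mul_colPot_le hα hb hθ.le (fun i j j' => hαθ (i, j') (i, j)) hbβ
      (rowPot_pos hα ha (sinkhornPot_pos hα ha hb k)) j j'

theorem exists_sinkhorn_weight_bound [Nonempty ι] [Nonempty κ] (hα : ∀ i j, 0 < α i j)
    (ha : ∀ i, 0 < a i) (hb : ∀ j, 0 < b j) :
    ∃ δ, 0 < δ ∧ δ ≤ 1 ∧ ∀ k i j,
      δ * ∑ j', α i j' * sinkhornPot α a b k j' ≤ α i j * sinkhornPot α a b k j := by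
  obtain ⟨θ, hθ, hθ1, hαθ⟩ := exists_pos_mul_le_of_pos (f := fun x : ι × κ => α x.1 x.2)
    fun x => hα x.1 x.2
  obtain ⟨c, hc, hc1, hv⟩ := exists_mul_sinkhornPot_le hα ha hb
  have hcard : (1 : ℝ) ≤ Fintype.card κ := by exact_mod_cast Fintype.card_pos
  refine ⟨θ * c / Fintype.card κ, by positivity, ?_, fun k i j => ?_⟩
  · rw [div_le_iff₀ (by positivity)]
    nlinarith [mul_le_one₀ hθ1 hc.le hc1]
  have hterm : ∀ j', θ * c * (α i j' * sinkhornPot α a b k j') ≤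
      α i j * sinkhornPot α a b k j := fun j' =>
    calc θ * c * (α i j' * sinkhornPot α a b k j')
        = (θ * α i j') * (c * sinkhornPot α a b k j') := by ring
      _ ≤ α i j * sinkhornPot α a b k j :=
        mul_le_mul (hαθ (i, j) (i, j')) (hv k j j')
          (mul_nonneg hc.le (sinkhornPot_pos hα ha hb k j').le) (hα i j).le
  calc θ * c / Fintype.card κ * ∑ j', α i j' * sinkhornPot α a b k j'
      = (∑ j', θ * c * (α i j' * sinkhornPot α a b k j')) / Fintype.card κ := by
        rw [← mul_sum]; ring
    _ ≤ (∑ _j' : κ, α i j * sinkhornPot α a b k j) / Fintype.card κ :=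
        div_le_div_of_nonneg_right (sum_le_sum fun j' _ => hterm j') (by positivity)
    _ = α i j * sinkhornPot α a b k j := by
        rw [sum_const, card_univ, nsmul_eq_mul]; field_simp

end SinkhornPotentials

section SinkhornContraction

variable {ι κ : Type*} [Fintype ι] [Fintype κ] [Nonempty ι] [Nonempty κ]
  {α : ι → κ → ℝ} {a : ι → ℝ} {b : κ → ℝ} {δ : ℝ}
  (hα : ∀ i j, 0 < α i j) (ha : ∀ i, 0 < a i) (hb : ∀ j, 0 < b j)
  (hδ : ∀ k i j, δ * ∑ j', α i j' * sinkhornPot α a b k j' ≤ α i j * sinkhornPot α a b k j)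

def rowRatio (α : ι → κ → ℝ) (a : ι → ℝ) (b : κ → ℝ) (k : ℕ) (i : ι) : ℝ :=
  rowPot α a (sinkhornPot α a b k) i / rowPot α a (sinkhornPot α a b (k + 1)) i

include hα ha hb

theorem sinkhornStep_iterate_succ_succ (k : ℕ) (i : ι) (j : κ) :
    (sinkhornStep a b)^[k + 2] α i j =
      (sinkhornStep a b)^[k + 1] α i j * (potRatio α a b (k + 1) j / rowRatio α a b k i) := by
  have hv := sinkhornPot_pos hα ha hb
  have hu : ∀ k i, 0 < rowPot α a (sinkhornPot α a b k) i :=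
    fun k => rowPot_pos hα ha (sinkhornPot_pos hα ha hb k)
  rw [sinkhornStep_iterate_succ hα ha hb, sinkhornStep_iterate_succ hα ha hb]
  simp only [diagScale, potRatio, rowRatio]
  field_simp [(hv (k + 1) j).ne', (hu k i).ne', (hu (k + 1) i).ne']

include hδ

theorem rowRatio_mem (k : ℕ) (i : ι) :
    rowRatio α a b k i ∈ Set.Icc
      (ratioInf α a b k + δ * (ratioSup α a b k - ratioInf α a b k))
      (ratioSup α a b k - δ * (ratioSup α a b k - ratioInf α a b k)) :=
  rowPot_div_rowPot_mem hα ha (sinkhornPot_pos hα ha hb k) (sinkhornPot_pos hα ha hb (k + 1))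
    (hδ k) i

theorem potRatio_succ_mem (k : ℕ) (j : κ) :
    potRatio α a b (k + 1) j ∈ Set.Icc
      (ratioInf α a b k + δ * (ratioSup α a b k - ratioInf α a b k))
      (ratioSup α a b k - δ * (ratioSup α a b k - ratioInf α a b k)) := by
  have hu : ∀ k i, 0 < rowPot α a (sinkhornPot α a b k) i :=
    fun k => rowPot_pos hα ha (sinkhornPot_pos hα ha hb k)
  have hmem := colPot_div_colPot_mem hα hb (hu k) (hu (k + 1)) j
  rw [← sinkhornPot_succ, ← sinkhornPot_succ] at hmem
  exact ⟨(le_ciInf fun i => (rowRatio_mem hα ha hb hδ k i).1).trans hmem.1,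
    hmem.2.trans (ciSup_le fun i => (rowRatio_mem hα ha hb hδ k i).2)⟩

theorem ratioInf_add_le_ratioInf_succ (k : ℕ) :
    ratioInf α a b k + δ * (ratioSup α a b k - ratioInf α a b k) ≤ ratioInf α a b (k + 1) :=
  le_ciInf fun j => (potRatio_succ_mem hα ha hb hδ k j).1

theorem ratioSup_succ_le_ratioSup_sub (k : ℕ) :
    ratioSup α a b (k + 1) ≤ ratioSup α a b k - δ * (ratioSup α a b k - ratioInf α a b k) :=
  ciSup_le fun j => (potRatio_succ_mem hα ha hb hδ k j).2

theorem ratioInf_zero_le (hδ0 : 0 ≤ δ) (k : ℕ) : ratioInf α a b 0 ≤ ratioInf α a b k := by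
  induction k with
  | zero => rfl
  | succ k ih =>
    have := mul_nonneg hδ0 (sub_nonneg.2 (ratioInf_le_ratioSup (α := α) (a := a) (b := b) k))
    linarith [ratioInf_add_le_ratioInf_succ hα ha hb hδ k]

theorem ratioSup_sub_ratioInf_le (hδ0 : 0 ≤ δ) (hδ1 : δ ≤ 1) (k : ℕ) :
    ratioSup α a b k - ratioInf α a b k ≤
      (ratioSup α a b 0 - ratioInf α a b 0) * (1 - δ) ^ k := by
  induction k with
  | zero => simp
  | succ k ih =>
    have hΔ := sub_nonneg.2 (ratioInf_le_ratioSup (α := α) (a := a) (b := b) k)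
    calc ratioSup α a b (k + 1) - ratioInf α a b (k + 1)
        ≤ (1 - δ) * (ratioSup α a b k - ratioInf α a b k) := by
          nlinarith [ratioInf_add_le_ratioInf_succ hα ha hb hδ k,
            ratioSup_succ_le_ratioSup_sub hα ha hb hδ k, mul_nonneg hδ0 hΔ]
      _ ≤ (1 - δ) * ((ratioSup α a b 0 - ratioInf α a b 0) * (1 - δ) ^ k) := by
          gcongr
      _ = _ := by ring

theorem dist_log_sinkhornStep_iterate_le (hδ0 : 0 ≤ δ) (hδ1 : δ ≤ 1) (k : ℕ) (i : ι) (j : κ) :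
    dist (log ((sinkhornStep a b)^[k + 1] α i j)) (log ((sinkhornStep a b)^[k + 2] α i j)) ≤
      (ratioSup α a b 0 - ratioInf α a b 0) / ratioInf α a b 0 * (1 - δ) ^ k := by
  have hΔ := sub_nonneg.2 (ratioInf_le_ratioSup (α := α) (a := a) (b := b) k)
  have hΔ₀ := sub_nonneg.2 (ratioInf_le_ratioSup (α := α) (a := a) (b := b) 0)
  have hshrink : Set.Icc (ratioInf α a b k + δ * (ratioSup α a b k - ratioInf α a b k))
      (ratioSup α a b k - δ * (ratioSup α a b k - ratioInf α a b k)) ⊆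
      Set.Icc (ratioInf α a b k) (ratioSup α a b k) :=
    Set.Icc_subset_Icc (by nlinarith) (by nlinarith)
  have hσ := hshrink (rowRatio_mem hα ha hb hδ k i)
  have hρ := hshrink (potRatio_succ_mem hα ha hb hδ k j)
  have hm := ratioInf_pos hα ha hb k
  rw [sinkhornStep_iterate_succ_succ hα ha hb,
    log_mul (sinkhornStep_iterate_succ_pos hα ha hb k i j).ne'
    (div_pos (hm.trans_le hρ.1) (hm.trans_le hσ.1)).ne',
    log_div (hm.trans_le hρ.1).ne' (hm.trans_le hσ.1).ne', dist_eq,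
    show ∀ x y z : ℝ, x - (x + (y - z)) = z - y by intros; ring]
  calc |log (rowRatio α a b k i) - log (potRatio α a b (k + 1) j)|
      ≤ (ratioSup α a b k - ratioInf α a b k) / ratioInf α a b k := abs_log_sub_log_le hm hσ hρ
    _ ≤ (ratioSup α a b 0 - ratioInf α a b 0) * (1 - δ) ^ k / ratioInf α a b 0 :=
        div_le_div₀ (mul_nonneg hΔ₀ (pow_nonneg (by linarith) k))
          (ratioSup_sub_ratioInf_le hα ha hb hδ hδ0 hδ1 k) (ratioInf_pos hα ha hb 0)
          (ratioInf_zero_le hα ha hb hδ hδ0 k)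
    _ = _ := by ring

end SinkhornContraction

section SinkhornLimit

variable {ι κ : Type*} [Fintype ι] [Fintype κ] [Nonempty ι] [Nonempty κ]
  {α G : ι → κ → ℝ} {a : ι → ℝ} {b : κ → ℝ}

theorem exists_tendsto_sinkhornStep_iterate (hα : ∀ i j, 0 < α i j) (ha : ∀ i, 0 < a i)
    (hb : ∀ j, 0 < b j) :
    ∃ G : ι → κ → ℝ, (∀ i j, 0 < G i j) ∧
      Tendsto (fun k => (sinkhornStep a b)^[k] α) atTop (𝓝 G) := by
  obtain ⟨δ, hδ0, hδ1, hδ⟩ := exists_sinkhorn_weight_bound hα ha hb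
  have hlog : ∀ i j, ∃ L, Tendsto (fun k => log ((sinkhornStep a b)^[k + 1] α i j)) atTop (𝓝 L) :=
    fun i j => cauchySeq_tendsto_of_complete <| cauchySeq_of_le_geometric (1 - δ) _
      (by linarith) (dist_log_sinkhornStep_iterate_le hα ha hb hδ hδ0.le hδ1 · i j)
  choose L hL using hlog
  refine ⟨fun i j => exp (L i j), fun i j => exp_pos _, ?_⟩
  rw [← tendsto_add_atTop_iff_nat 1]
  refine tendsto_pi_nhds.2 fun i => tendsto_pi_nhds.2 fun j => ?_
  refine ((continuous_exp.tendsto _).comp (hL i j)).congr fun k => ?_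
  exact exp_log (sinkhornStep_iterate_succ_pos hα ha hb k i j)

theorem sum_eq_of_sinkhornStep_eq_self (ha : ∀ i, 0 < a i) (hb : ∀ j, 0 < b j)
    (hab : ∑ i, a i = ∑ j, b j) (hG : ∀ i j, 0 < G i j)
    (hfix : sinkhornStep a b G = G) :
    (∀ i, ∑ j, G i j = a i) ∧ ∀ j, ∑ i, G i j = b j := by
  have hR : ∀ i, 0 < ∑ j, G i j := fun i => sum_pos (fun j _ => hG i j) univ_nonempty
  have hC : ∀ j, 0 < ∑ i, rowScale a G i j := fun j =>
    sum_pos (fun i _ => div_pos (mul_pos (ha i) (hG i j)) (hR i)) univ_nonempty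
  have hcol : ∀ j, ∑ i, G i j = b j := fun j => by
    conv_lhs => rw [← hfix]
    exact sum_colScale (hC j).ne'
  have hRC : ∀ i j, (∑ j', G i j') * ∑ i', rowScale a G i' j = a i * b j := fun i j => by
    have h := congrFun (congrFun hfix i) j
    simp only [sinkhornStep, colScale] at h
    rw [rowScale, div_eq_iff (hC j).ne', mul_div_assoc', div_eq_iff (hR i).ne'] at h
    exact mul_left_cancel₀ (hG i j).ne' (by linear_combination -h)
  have hmass : ∑ i, ∑ j, G i j = ∑ j, b j := by rw [sum_comm]; exact sum_congr rfl fun j _ => hcol j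
  have hCb : ∀ j, ∑ i, rowScale a G i j = b j := fun j => by
    refine mul_left_cancel₀ (sum_pos (fun i _ => hR i) univ_nonempty).ne' ?_
    calc (∑ i, ∑ j', G i j') * ∑ i', rowScale a G i' j
        = ∑ i, (∑ j', G i j') * ∑ i', rowScale a G i' j := sum_mul _ _ _
      _ = (∑ i, a i) * b j := by rw [sum_mul]; exact sum_congr rfl fun i _ => hRC i j
      _ = (∑ i, ∑ j', G i j') * b j := by rw [hab, hmass]
  refine ⟨fun i => ?_, hcol⟩
  obtain ⟨j⟩ := ‹Nonempty κ›
  have h := hRC i j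
  rw [hCb j] at h
  exact mul_right_cancel₀ (hb j).ne' h

theorem exists_sinkhorn_limit (hα : ∀ i j, 0 < α i j) (ha : ∀ i, 0 < a i) (hb : ∀ j, 0 < b j)
    (hab : ∑ i, a i = ∑ j, b j) :
    ∃ G : ι → κ → ℝ, (∀ i j, 0 < G i j) ∧ (∀ i, ∑ j, G i j = a i) ∧
      (∀ j, ∑ i, G i j = b j) ∧ IsDiagScaling α G ∧
      Tendsto (fun k => (sinkhornStep a b)^[k] α) atTop (𝓝 G) := by
  obtain ⟨G, hG, hlim⟩ := exists_tendsto_sinkhornStep_iterate hα ha hb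
  have hfix := isFixedPt_of_tendsto_iterate hlim (continuousAt_sinkhornStep ha hG)
  obtain ⟨hrow, hcol⟩ := sum_eq_of_sinkhornStep_eq_self ha hb hab hG hfix
  exact ⟨G, hG, hrow, hcol,
    isDiagScaling_of_tendsto hα hG (isDiagScaling_sinkhornStep_iterate hα ha hb) hlim, hlim⟩

end SinkhornLimit

end

theorem stmt_16_general (d : ℕ) (hd : 0 < d)
    (ν₀ ν₁ : Fin d → ℝ) (hν₀ : ∀ i, 0 < ν₀ i) (hν₁ : ∀ j, 0 < ν₁ j)
    (m₀ : ℝ) (hm₀def : m₀ = ∑ i, ν₀ i) (hν₁1 : ∑ j, ν₁ j = 1)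
    (ν₀t : Fin d → ℝ) (hν₀t : ν₀t = fun i => ν₀ i / m₀)
    (α : Fin d → Fin d → ℝ) (hα : ∀ i j, 0 < α i j)
    (KL : (Fin d → Fin d → ℝ) → (Fin d → Fin d → ℝ) → ℝ)
    (hKL : KL = fun γ β => ∑ i : Fin d, ∑ j : Fin d, γ i j * Real.log (γ i j / β i j))
    -- the KL projections onto the two affine constraint sets (row/column rescaling):
    (rowProj colProj : (Fin d → Fin d → ℝ) → (Fin d → Fin d → ℝ))
    (hrowProj : rowProj = fun γ => fun i j => ν₀ i * γ i j / ∑ j', γ i j')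
    (hcolProj : colProj = fun γ => fun i j => ν₁ j * γ i j / ∑ i', γ i' j)
    (γseq : ℕ → Fin d → Fin d → ℝ)
    (hγ0 : γseq 0 = α)
    (hγsucc : ∀ k, γseq (k + 1) = if Even k then rowProj (γseq k) else colProj (γseq k)) :
    ∃ γstar : Fin d → Fin d → ℝ,
      ((∀ i j, 0 ≤ γstar i j) ∧ (∀ i, ∑ j, γstar i j = ν₀t i) ∧
        (∀ j, ∑ i, γstar i j = ν₁ j)) ∧
      (∀ γ : Fin d → Fin d → ℝ,
        (∀ i j, 0 ≤ γ i j) → (∀ i, ∑ j, γ i j = ν₀t i) → (∀ j, ∑ i, γ i j = ν₁ j) →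
        KL γstar α ≤ KL γ α) ∧
      Filter.Tendsto (fun k => γseq (2 * k)) Filter.atTop (nhds γstar) ∧
      Filter.Tendsto (fun k => γseq (2 * k + 1)) Filter.atTop
        (nhds (fun i j => m₀ * γstar i j)) := by
  have : Nonempty (Fin d) := ⟨⟨0, hd⟩⟩
  subst hKL hrowProj hcolProj
  have hm₀pos : 0 < m₀ := hm₀def ▸ sum_pos (fun i _ => hν₀ i) univ_nonempty
  have hν₀t_pos : ∀ i, 0 < ν₀t i := fun i => hν₀t ▸ div_pos (hν₀ i) hm₀pos
  have hν₀_eq : ν₀ = m₀ • ν₀t := by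
    funext i; simp [hν₀t, mul_div_cancel₀ _ hm₀pos.ne']
  have hmass : ∑ i, ν₀t i = ∑ j, ν₁ j := by
    rw [hν₁1, hν₀t, ← sum_div, ← hm₀def, div_self hm₀pos.ne']
  -- the column step forgets the factor `m₀` between row scaling to `ν₀` and to `ν₀t`
  have heven (k : ℕ) : γseq (2 * k) = (sinkhornStep ν₀t ν₁)^[k] α := by
    rw [alternating_even (f := rowScale ν₀) (g := colScale ν₁) hγsucc, hγ0, hν₀_eq,
      ← sinkhornStep_smul hm₀pos.ne' (c := ν₁)]
    rfl
  obtain ⟨G, hG, hrow, hcol, hdiag, hlim⟩ := exists_sinkhorn_limit hα hν₀t_pos hν₁ hmass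
  refine ⟨G, ⟨fun i j => (hG i j).le, hrow, hcol⟩,
    fun γ hγ hγrow hγcol => klDiv_le_of_isDiagScaling hα hdiag hγ
      (fun i => by rw [hγrow, hrow]) (fun j => by rw [hγcol, hcol]),
    by simpa only [heven] using hlim, ?_⟩
  have hodd : Tendsto (fun k => rowScale ν₀ (γseq (2 * k))) atTop (𝓝 (rowScale ν₀ G)) :=
    (continuousAt_rowScale fun i => by rw [hrow]; exact (hν₀t_pos i).ne').tendsto.comp
      (by simpa only [heven] using hlim)
  rw [hν₀_eq, rowScale_smul, rowScale_eq_self hrow fun i => (hν₀t_pos i).ne', ← hν₀_eq] at hodd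
  simp only [alternating_odd (f := rowScale ν₀) (g := colScale ν₁) hγsucc]
  exact hodd

/-- Alternating KL projections with mismatched masses: starting from a positive
matrix `α`, the even iterates converge to the KL projection of `α` onto
`Π(ν̃₀, ν₁)` and the odd iterates converge to `m₀` times that projection. -/
theorem stmt_16 (d : ℕ) (hd : 0 < d)
    (ν₀ ν₁ : Fin d → ℝ) (hν₀ : ∀ i, 0 < ν₀ i) (hν₁ : ∀ j, 0 < ν₁ j)
    (m₀ : ℝ) (hm₀def : m₀ = ∑ i, ν₀ i) (hm₀ : 1 < m₀) (hν₁1 : ∑ j, ν₁ j = 1)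
    (ν₀t : Fin d → ℝ) (hν₀t : ν₀t = fun i => ν₀ i / m₀)
    (α : Fin d → Fin d → ℝ) (hα : ∀ i j, 0 < α i j)
    (KL : (Fin d → Fin d → ℝ) → (Fin d → Fin d → ℝ) → ℝ)
    (hKL : KL = fun γ β => ∑ i : Fin d, ∑ j : Fin d, γ i j * Real.log (γ i j / β i j))
    -- the KL projections onto the two affine constraint sets (row/column rescaling):
    (rowProj colProj : (Fin d → Fin d → ℝ) → (Fin d → Fin d → ℝ))
    (hrowProj : rowProj = fun γ => fun i j => ν₀ i * γ i j / ∑ j', γ i j')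
    (hcolProj : colProj = fun γ => fun i j => ν₁ j * γ i j / ∑ i', γ i' j)
    (γseq : ℕ → Fin d → Fin d → ℝ)
    (hγ0 : γseq 0 = α)
    (hγsucc : ∀ k, γseq (k + 1) = if Even k then rowProj (γseq k) else colProj (γseq k)) :
    ∃ γstar : Fin d → Fin d → ℝ,
      ((∀ i j, 0 ≤ γstar i j) ∧ (∀ i, ∑ j, γstar i j = ν₀t i) ∧
        (∀ j, ∑ i, γstar i j = ν₁ j)) ∧
      (∀ γ : Fin d → Fin d → ℝ,
        (∀ i j, 0 ≤ γ i j) → (∀ i, ∑ j, γ i j = ν₀t i) → (∀ j, ∑ i, γ i j = ν₁ j) →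
        KL γstar α ≤ KL γ α) ∧
      Filter.Tendsto (fun k => γseq (2 * k)) Filter.atTop (nhds γstar) ∧
      Filter.Tendsto (fun k => γseq (2 * k + 1)) Filter.atTop
        (nhds (fun i j => m₀ * γstar i j)) :=
  stmt_16_general d hd ν₀ ν₁ hν₀ hν₁ m₀ hm₀def hν₁1 ν₀t hν₀t α hα KL hKL rowProj colProj hrowProj
    hcolProj γseq hγ0 hγsucc
end

section
/- Let J ⊂ ℝ be a compact interval and ν₀, ν₁ probability measures on J absolutely continuous with respect to Lebesgue measure. For the quadratic cost c(x,y) = (x-y)², there exists a unique optimal transport plan γ ∈ Π(ν₀,ν₁) minimizing ∫ c dγ, and γ is induced by a Borel map T : J → J, i.e., γ = (id × T)_# ν₀. -/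
/-!
The monotone rearrangement `T = F₁⁻¹ ∘ F₀` pushes `ν₀` to `ν₁`, because `ν₀` has no atoms and
hence `F₀` is uniformly distributed under `ν₀`. For a coupling `γ` carried by `[c, d]²`,
`(x - y)² = (x - c)² + (y - c)² - 2 (x - c)(y - c)`, and by the layer-cake formula
`∫ (x - c)(y - c) dγ` is the integral over the quadrant `(c, ∞)²` of the joint survival function
`γ((s, ∞) × (t, ∞))`. That function is at most `min (ν₀ (s, ∞)) (ν₁ (t, ∞))`, with equality for the
plan of the monotone map `T`, so this plan minimises the cost. Any other optimal plan has the same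
joint survival function almost everywhere, hence everywhere by right continuity, hence is equal to
the monotone plan.
-/

open MeasureTheory ProbabilityTheory Set Filter Topology
open scoped ENNReal

section CDF

variable (ν : Measure ℝ) [IsProbabilityMeasure ν] [NullSingletonClass ν]

lemma continuous_cdf : Continuous (cdf ν) := by
  refine continuous_iff_continuousAt.2 fun x => ?_
  have hleft : Function.leftLim (cdf ν) x = cdf ν x := by
    have h := (cdf ν).measure_singleton x
    rw [measure_cdf, measure_singleton, eq_comm, ENNReal.ofReal_eq_zero, sub_nonpos] at h
    exact le_antisymm ((monotone_cdf ν).leftLim_le le_rfl) h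
  rw [(monotone_cdf ν).continuousAt_iff_leftLim_eq_rightLim, hleft, StieltjesFunction.rightLim_eq]

lemma measure_cdf_le {c : ℝ} (hc0 : 0 ≤ c) (hc1 : c ≤ 1) :
    ν {x | cdf ν x ≤ c} = ENNReal.ofReal c := by
  set S := {x | cdf ν x ≤ c}
  rcases eq_or_lt_of_le hc1 with rfl | hc1
  · simp [S, cdf_le_one]
  rcases S.eq_empty_or_nonempty with hS | hS
  · have hc : c ≤ 0 := ge_of_tendsto (tendsto_cdf_atBot ν) <| Eventually.of_forall fun x =>
      (not_le.1 (eq_empty_iff_forall_notMem.1 hS x)).le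
    rw [hS, measure_empty, le_antisymm hc hc0, ENNReal.ofReal_zero]
  obtain ⟨x₁, hx₁⟩ : ∃ x, c < cdf ν x :=
    ((tendsto_cdf_atTop ν).eventually (lt_mem_nhds hc1)).exists
  have hx₁S : x₁ ∈ upperBounds S := fun x hx =>
    ((monotone_cdf ν).reflect_lt (lt_of_le_of_lt hx hx₁)).le
  set m := sSup S
  have hm : m ∈ S := (isClosed_le (continuous_cdf ν) continuous_const).csSup_mem hS ⟨x₁, hx₁S⟩
  have hSm : S = Iic m := Subset.antisymm (fun x hx => le_csSup ⟨x₁, hx₁S⟩ hx)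
    fun x hx => (monotone_cdf ν hx).trans hm
  obtain ⟨z, hz, hzc⟩ := intermediate_value_Icc (csSup_le hS hx₁S) (continuous_cdf ν).continuousOn
    ⟨hm, hx₁.le⟩
  have hzm : z = m := le_antisymm (le_csSup ⟨x₁, hx₁S⟩ hzc.le) hz.1
  rw [hSm, ← ofReal_cdf, ← hzm, hzc]

end CDF

/-- Truncated to `[a, b]` so that `sInf` never sees an empty or unbounded set; for a measure
carried by `[a, b]` and `0 < u ≤ 1` it is the usual generalized inverse of the cdf. -/
noncomputable def quantile (a b : ℝ) (ν : Measure ℝ) (u : ℝ) : ℝ :=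
  sInf (insert b {y ∈ Icc a b | u ≤ cdf ν y})

section Quantile

variable {a b : ℝ} {ν : Measure ℝ}

lemma bddBelow_quantile_set (hab : a ≤ b) (u : ℝ) :
    BddBelow (insert b {y ∈ Icc a b | u ≤ cdf ν y}) :=
  ⟨a, forall_mem_insert.2 ⟨hab, fun _ hy => hy.1.1⟩⟩

lemma quantile_mem_Icc (hab : a ≤ b) (u : ℝ) : quantile a b ν u ∈ Icc a b :=
  ⟨le_csInf (insert_nonempty _ _) (forall_mem_insert.2 ⟨hab, fun _ hy => hy.1.1⟩),
    csInf_le (bddBelow_quantile_set hab u) (mem_insert _ _)⟩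

lemma monotone_quantile (hab : a ≤ b) : Monotone (quantile a b ν) := fun _ _ huv =>
  csInf_le_csInf (bddBelow_quantile_set hab _) (insert_nonempty _ _)
    (insert_subset_insert fun _ hy => ⟨hy.1, huv.trans hy.2⟩)

variable [IsProbabilityMeasure ν]

lemma cdf_eq_one_of_ae_le (hν : ∀ᵐ x ∂ν, x ≤ b) : cdf ν b = 1 := by
  rw [← ENNReal.ofReal_eq_one, ofReal_cdf, ← prob_compl_eq_zero_iff measurableSet_Iic]
  exact hν

lemma cdf_eq_zero_of_ae_lt {y : ℝ} (hν : ∀ᵐ x ∂ν, y < x) : cdf ν y = 0 := by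
  have h : ν (Iic y) = 0 := measure_mono_null (fun x hx => not_lt.2 hx) (ae_iff.1 hν)
  rw [← ofReal_cdf, ENNReal.ofReal_eq_zero] at h
  exact le_antisymm h (cdf_nonneg ν y)

lemma quantile_le_iff (hab : a ≤ b) (hν : ∀ᵐ x ∂ν, x ∈ Icc a b) {u : ℝ} (hu0 : 0 < u)
    (hu1 : u ≤ 1) (y : ℝ) : quantile a b ν u ≤ y ↔ u ≤ cdf ν y := by
  have hset : ∀ z ∈ insert b {w ∈ Icc a b | u ≤ cdf ν w}, u ≤ cdf ν z := forall_mem_insert.2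
    ⟨(cdf_eq_one_of_ae_le (hν.mono fun _ hx => hx.2)).symm ▸ hu1, fun _ hz => hz.2⟩
  have hq : u ≤ cdf ν (quantile a b ν u) := by
    refine ge_of_tendsto (((cdf ν).right_continuous _).tendsto.mono_left
      (nhdsWithin_mono _ Ioi_subset_Ici_self)) ?_
    filter_upwards [self_mem_nhdsWithin] with z hz
    obtain ⟨w, hw, hwz⟩ := exists_lt_of_csInf_lt (insert_nonempty _ _) (mem_Ioi.1 hz)
    exact (hset w hw).trans (monotone_cdf ν hwz.le)
  refine ⟨fun h => hq.trans (monotone_cdf ν h), fun h => ?_⟩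
  rcases lt_or_ge y a with hya | hay
  · rw [cdf_eq_zero_of_ae_lt (hν.mono fun _ hx => hya.trans_le hx.1)] at h
    exact absurd h (not_le.2 hu0)
  rcases le_or_gt y b with hyb | hby
  · exact csInf_le (bddBelow_quantile_set hab u) (mem_insert_of_mem _ ⟨⟨hay, hyb⟩, h⟩)
  · exact (quantile_mem_Icc hab u).2.trans hby.le

end Quantile

lemma map_quantile_cdf {a b : ℝ} {ν₀ ν₁ : Measure ℝ} [IsProbabilityMeasure ν₀]
    [NullSingletonClass ν₀] [IsProbabilityMeasure ν₁] (hab : a ≤ b)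
    (hν₁ : ∀ᵐ x ∂ν₁, x ∈ Icc a b) :
    ν₀.map (quantile a b ν₁ ∘ cdf ν₀) = ν₁ := by
  have hT : Measurable (quantile a b ν₁ ∘ cdf ν₀) :=
    ((monotone_quantile hab).comp (monotone_cdf ν₀)).measurable
  have := Measure.isProbabilityMeasure_map (μ := ν₀) hT.aemeasurable
  refine Measure.ext_of_Iic _ _ fun y => ?_
  have hpos : ∀ᵐ x ∂ν₀, 0 < cdf ν₀ x := by
    simpa only [ae_iff, not_lt, ENNReal.ofReal_zero] using measure_cdf_le ν₀ le_rfl zero_le_one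
  have hpre : quantile a b ν₁ ∘ cdf ν₀ ⁻¹' Iic y =ᵐ[ν₀] {x | cdf ν₀ x ≤ cdf ν₁ y} := by
    filter_upwards [hpos] with x hx
    exact propext (quantile_le_iff hab hν₁ hx (cdf_le_one ν₀ x) y)
  rw [Measure.map_apply hT measurableSet_Iic, measure_congr hpre,
    measure_cdf_le ν₀ (cdf_nonneg ν₁ y) (cdf_le_one ν₁ y), ofReal_cdf]

noncomputable def jointSurvival (γ : Measure (ℝ × ℝ)) (q : ℝ × ℝ) : ℝ≥0∞ :=
  γ (Ioi q.1 ×ˢ Ioi q.2)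

section JointSurvival

variable (γ : Measure (ℝ × ℝ))

lemma antitone_jointSurvival : Antitone (jointSurvival γ) := fun _ _ h =>
  measure_mono (prod_mono (Ioi_subset_Ioi h.1) (Ioi_subset_Ioi h.2))

lemma measurable_jointSurvival [SFinite γ] : Measurable (jointSurvival γ) :=
  measurable_measure_prodMk_right (s := {r : (ℝ × ℝ) × (ℝ × ℝ) | r.2.1 < r.1.1 ∧ r.2.2 < r.1.2})
    (by measurability)

lemma tendsto_jointSurvival (q : ℝ × ℝ) :
    Tendsto (fun n : ℕ => jointSurvival γ (q.1 + (n + 1 : ℝ)⁻¹, q.2 + (n + 1 : ℝ)⁻¹)) atTop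
      (𝓝 (jointSurvival γ q)) := by
  have hmono : Monotone fun n : ℕ => Ioi (q.1 + (n + 1 : ℝ)⁻¹) ×ˢ Ioi (q.2 + (n + 1 : ℝ)⁻¹) :=
    fun i j hij => by
      have : (j + 1 : ℝ)⁻¹ ≤ (i + 1 : ℝ)⁻¹ := by gcongr
      exact prod_mono (Ioi_subset_Ioi (by linarith)) (Ioi_subset_Ioi (by linarith))
  have hunion : ⋃ n : ℕ, Ioi (q.1 + (n + 1 : ℝ)⁻¹) ×ˢ Ioi (q.2 + (n + 1 : ℝ)⁻¹) =
      Ioi q.1 ×ˢ Ioi q.2 := by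
    ext p
    simp only [mem_iUnion, mem_prod, mem_Ioi]
    constructor
    · rintro ⟨n, h1, h2⟩
      have : (0 : ℝ) < (n + 1 : ℝ)⁻¹ := by positivity
      exact ⟨by linarith, by linarith⟩
    · rintro ⟨h1, h2⟩
      obtain ⟨n, hn⟩ := exists_nat_one_div_lt (lt_min (sub_pos.2 h1) (sub_pos.2 h2))
      rw [one_div, lt_min_iff] at hn
      exact ⟨n, by linarith, by linarith⟩
  rw [jointSurvival, ← hunion]
  exact tendsto_measure_iUnion_atTop hmono

lemma jointSurvival_eq_max {c : ℝ} (hγ : ∀ᵐ p ∂γ, p ∈ Ioi c ×ˢ Ioi c) (q : ℝ × ℝ) :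
    jointSurvival γ q = jointSurvival γ (max q.1 c, max q.2 c) := by
  refine measure_congr ?_
  filter_upwards [hγ] with p ⟨h1, h2⟩
  change (p ∈ Ioi q.1 ×ˢ Ioi q.2) = (p ∈ Ioi (max q.1 c) ×ˢ Ioi (max q.2 c))
  simp_all

lemma ext_of_jointSurvival {γ γ' : Measure (ℝ × ℝ)} [IsFiniteMeasure γ]
    (h : jointSurvival γ = jointSurvival γ') (huniv : γ univ = γ' univ) : γ = γ' := by
  have hspan : IsCountablySpanning (range (Ioi : ℝ → Set ℝ)) :=
    ⟨fun n => Ioi (-n : ℝ), fun n => mem_range_self _,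
      iUnion_eq_univ_iff.2 fun x => (exists_nat_gt (-x)).imp fun _ hn => neg_lt.1 hn⟩
  have hgen : (inferInstance : MeasurableSpace (ℝ × ℝ)) = MeasurableSpace.generateFrom
      (image2 (· ×ˢ ·) (range (Ioi : ℝ → Set ℝ)) (range Ioi)) := by
    rw [← generateFrom_prod_eq hspan hspan, ← borel_eq_generateFrom_Ioi, ← BorelSpace.measurable_eq]
  refine ext_of_generate_finite _ hgen (isPiSystem_Ioi.prod isPiSystem_Ioi) ?_ huniv
  rintro _ ⟨_, ⟨s, rfl⟩, _, ⟨t, rfl⟩, rfl⟩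
  exact congrFun h (s, t)

end JointSurvival

lemma lintegral_ofReal_mul_eq_setLIntegral_jointSurvival (γ : Measure (ℝ × ℝ)) [SFinite γ]
    (c : ℝ) :
    ∫⁻ p, ENNReal.ofReal (p.1 - c) * ENNReal.ofReal (p.2 - c) ∂γ =
      ∫⁻ q in Ioi c ×ˢ Ioi c, jointSurvival γ q := by
  set E : Set ((ℝ × ℝ) × (ℝ × ℝ)) :=
    {r | r.2 ∈ Ioi c ×ˢ Ioi c ∧ r.2.1 < r.1.1 ∧ r.2.2 < r.1.2}
  have hE : MeasurableSet E := by measurability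
  have h := (Measure.prod_apply (μ := γ) (ν := volume) hE).symm.trans (Measure.prod_apply_symm hE)
  convert h using 1
  · refine lintegral_congr fun p => ?_
    have : Prod.mk p ⁻¹' E = Ioo c p.1 ×ˢ Ioo c p.2 := by
      ext q
      simp only [E, preimage_ofPred_eq, mem_ofPred_eq, mem_prod, mem_Ioi, mem_Ioo]
      tauto
    rw [this, Measure.volume_eq_prod, Measure.prod_prod, Real.volume_Ioo, Real.volume_Ioo]
  · rw [← lintegral_indicator (measurableSet_Ioi.prod measurableSet_Ioi)]
    refine lintegral_congr fun q => ?_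
    by_cases hq : q ∈ Ioi c ×ˢ Ioi c
    · have : (fun p => (p, q)) ⁻¹' E = Ioi q.1 ×ˢ Ioi q.2 := by
        ext p; exact ⟨fun h => h.2, fun h => ⟨hq, h⟩⟩
      rw [indicator_of_mem hq, this, jointSurvival]
    · have : (fun p => (p, q)) ⁻¹' E = ∅ := by
        ext p; exact iff_of_false (fun h => hq h.1) id
      rw [indicator_of_notMem hq, this, measure_empty]

lemma exists_mem_Ioo_prod_Ioo_of_ae {P : ℝ × ℝ → Prop} {s : Set (ℝ × ℝ)}
    (hP : ∀ᵐ q ∂volume.restrict s, P q) {q : ℝ × ℝ} {ε : ℝ} (hε : 0 < ε)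
    (hs : Ioo q.1 (q.1 + ε) ×ˢ Ioo q.2 (q.2 + ε) ⊆ s) :
    ∃ r ∈ Ioo q.1 (q.1 + ε) ×ˢ Ioo q.2 (q.2 + ε), P r := by
  have hpos : volume (Ioo q.1 (q.1 + ε) ×ˢ Ioo q.2 (q.2 + ε)) ≠ 0 := by
    have hne (x : ℝ) : (Ioo x (x + ε)).Nonempty := nonempty_Ioo.2 (lt_add_of_pos_right x hε)
    exact ((isOpen_Ioo.prod isOpen_Ioo).measure_pos volume ((hne q.1).prod (hne q.2))).ne'
  have := ae_restrict_neBot.2 hpos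
  exact ((ae_restrict_mem (measurableSet_Ioo.prod measurableSet_Ioo)).and
    (ae_restrict_of_ae_restrict_of_subset hs hP)).exists

lemma eq_of_jointSurvival_le_of_setLIntegral_le {γ γ' : Measure (ℝ × ℝ)}
    [IsProbabilityMeasure γ] [IsProbabilityMeasure γ'] {c : ℝ}
    (hγ : ∀ᵐ p ∂γ, p ∈ Ioi c ×ˢ Ioi c) (hγ' : ∀ᵐ p ∂γ', p ∈ Ioi c ×ˢ Ioi c)
    (hle : jointSurvival γ ≤ jointSurvival γ')
    (hint : ∫⁻ q in Ioi c ×ˢ Ioi c, jointSurvival γ' q ≤ ∫⁻ q in Ioi c ×ˢ Ioi c, jointSurvival γ q)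
    (hfin : ∫⁻ q in Ioi c ×ˢ Ioi c, jointSurvival γ q ≠ ∞) : γ = γ' := by
  have hae : ∀ᵐ q ∂volume.restrict (Ioi c ×ˢ Ioi c), jointSurvival γ q = jointSurvival γ' q :=
    ae_eq_of_ae_le_of_lintegral_le (ae_of_all _ hle) hfin
      (measurable_jointSurvival γ').aemeasurable hint
  have hge : ∀ q ∈ Ici c ×ˢ Ici c, jointSurvival γ' q ≤ jointSurvival γ q := by
    intro q hq
    refine le_of_tendsto' (tendsto_jointSurvival γ' q) fun n => ?_
    have hε : (0 : ℝ) < (n + 1 : ℝ)⁻¹ := by positivity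
    obtain ⟨r, hr, hr_eq⟩ := exists_mem_Ioo_prod_Ioo_of_ae hae hε fun r hr =>
      ⟨hq.1.trans_lt hr.1.1, hq.2.trans_lt hr.2.1⟩
    calc jointSurvival γ' (q.1 + (n + 1 : ℝ)⁻¹, q.2 + (n + 1 : ℝ)⁻¹)
        ≤ jointSurvival γ' r := antitone_jointSurvival γ' ⟨hr.1.2.le, hr.2.2.le⟩
      _ = jointSurvival γ r := hr_eq.symm
      _ ≤ jointSurvival γ q := antitone_jointSurvival γ ⟨hr.1.1.le, hr.2.1.le⟩
  refine ext_of_jointSurvival (funext fun q => ?_) (by simp)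
  rw [jointSurvival_eq_max γ hγ, jointSurvival_eq_max γ' hγ']
  exact le_antisymm (hle _) (hge _ ⟨le_max_right q.1 c, le_max_right q.2 c⟩)

def IsCoupling {α β : Type*} [MeasurableSpace α] [MeasurableSpace β] (γ : Measure (α × β))
    (μ : Measure α) (ν : Measure β) : Prop :=
  γ.map Prod.fst = μ ∧ γ.map Prod.snd = ν

namespace IsCoupling

variable {α β : Type*} [MeasurableSpace α] [MeasurableSpace β] {γ : Measure (α × β)}
  {μ : Measure α} {ν : Measure β}

lemma isProbabilityMeasure [IsProbabilityMeasure μ] (h : IsCoupling γ μ ν) :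
    IsProbabilityMeasure γ :=
  ⟨by rw [← preimage_univ (f := Prod.fst), ← Measure.map_apply measurable_fst .univ, h.1,
    measure_univ]⟩

lemma ae_mem_prod (h : IsCoupling γ μ ν) {s : Set α} {t : Set β} (hs : ∀ᵐ x ∂μ, x ∈ s)
    (ht : ∀ᵐ y ∂ν, y ∈ t) : ∀ᵐ p ∂γ, p ∈ s ×ˢ t :=
  (ae_of_ae_map measurable_fst.aemeasurable (h.1 ▸ hs)).and
    (ae_of_ae_map measurable_snd.aemeasurable (h.2 ▸ ht))

end IsCoupling

lemma isCoupling_map_graph {α β : Type*} [MeasurableSpace α] [MeasurableSpace β]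
    (μ : Measure α) {f : α → β} (hf : Measurable f) :
    IsCoupling (μ.map fun x => (x, f x)) μ (μ.map f) := by
  constructor <;> rw [Measure.map_map (by fun_prop) (by fun_prop)]
  · exact Measure.map_id
  · rfl

lemma IsCoupling.jointSurvival_le {γ : Measure (ℝ × ℝ)} {μ ν : Measure ℝ} (h : IsCoupling γ μ ν)
    (q : ℝ × ℝ) : jointSurvival γ q ≤ min (μ (Ioi q.1)) (ν (Ioi q.2)) := by
  rw [← h.1, ← h.2, Measure.map_apply measurable_fst measurableSet_Ioi,
    Measure.map_apply measurable_snd measurableSet_Ioi]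
  exact le_min (measure_mono fun p hp => hp.1) (measure_mono fun p hp => hp.2)

lemma jointSurvival_map_graph (μ : Measure ℝ) {f : ℝ → ℝ} (hf : Monotone f) (q : ℝ × ℝ) :
    jointSurvival (μ.map fun x => (x, f x)) q = min (μ (Ioi q.1)) (μ.map f (Ioi q.2)) := by
  rw [jointSurvival, Measure.map_apply (f := fun x => (x, f x)) (measurable_id.prodMk hf.measurable)
    (measurableSet_Ioi.prod measurableSet_Ioi), Measure.map_apply hf.measurable measurableSet_Ioi]
  change μ (Ioi q.1 ∩ f ⁻¹' Ioi q.2) = _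
  rcases (isUpperSet_Ioi (a := q.1)).total ((isUpperSet_Ioi (a := q.2)).preimage hf)
    with hsub | hsub
  · rw [inter_eq_left.2 hsub, min_eq_left (measure_mono hsub)]
  · rw [inter_eq_right.2 hsub, min_eq_right (measure_mono hsub)]

lemma Continuous.integrable_of_ae_mem_isCompact {X E : Type*} [TopologicalSpace X] [T2Space X]
    [MeasurableSpace X] [OpensMeasurableSpace X] [NormedAddCommGroup E] {μ : Measure X}
    [IsFiniteMeasure μ] {f : X → E} (hf : Continuous f) {K : Set X} (hK : IsCompact K)
    (hμ : ∀ᵐ x ∂μ, x ∈ K) : Integrable f μ := by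
  rw [← Measure.restrict_eq_self_of_ae_mem hμ]
  exact hf.continuousOn.integrableOn_compact hK

section Cost

variable {γ : Measure (ℝ × ℝ)} [IsFiniteMeasure γ] {c d : ℝ}

lemma setLIntegral_jointSurvival_eq_ofReal (hγ : ∀ᵐ p ∂γ, p ∈ Icc c d ×ˢ Icc c d) :
    ∫⁻ q in Ioi c ×ˢ Ioi c, jointSurvival γ q =
      ENNReal.ofReal (∫ p, (p.1 - c) * (p.2 - c) ∂γ) := by
  have hnonneg : ∀ᵐ p ∂γ, 0 ≤ (p.1 - c) * (p.2 - c) := hγ.mono fun p hp =>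
    mul_nonneg (sub_nonneg.2 hp.1.1) (sub_nonneg.2 hp.2.1)
  have hint : Integrable (fun p : ℝ × ℝ => (p.1 - c) * (p.2 - c)) γ :=
    Continuous.integrable_of_ae_mem_isCompact (by fun_prop) (isCompact_Icc.prod isCompact_Icc) hγ
  rw [ofReal_integral_eq_lintegral_ofReal hint hnonneg,
    ← lintegral_ofReal_mul_eq_setLIntegral_jointSurvival]
  refine lintegral_congr_ae ?_
  filter_upwards [hγ] with p hp
  exact (ENNReal.ofReal_mul (sub_nonneg.2 hp.1.1)).symm

lemma integral_sq_sub_eq (hγ : ∀ᵐ p ∂γ, p ∈ Icc c d ×ˢ Icc c d) :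
    ∫ p, (p.1 - p.2) ^ 2 ∂γ = ∫ p, (p.1 - c) ^ 2 ∂γ + ∫ p, (p.2 - c) ^ 2 ∂γ
      - 2 * (∫⁻ q in Ioi c ×ˢ Ioi c, jointSurvival γ q).toReal := by
  have hint : ∀ f : ℝ × ℝ → ℝ, Continuous f → Integrable f γ := fun _ hf =>
    hf.integrable_of_ae_mem_isCompact (isCompact_Icc.prod isCompact_Icc) hγ
  have hcorr : 0 ≤ ∫ p, (p.1 - c) * (p.2 - c) ∂γ := integral_nonneg_of_ae <|
    hγ.mono fun p hp => mul_nonneg (sub_nonneg.2 hp.1.1) (sub_nonneg.2 hp.2.1)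
  rw [setLIntegral_jointSurvival_eq_ofReal hγ, ENNReal.toReal_ofReal hcorr]
  calc ∫ p, (p.1 - p.2) ^ 2 ∂γ
      = ∫ p, ((p.1 - c) ^ 2 + (p.2 - c) ^ 2) - 2 * ((p.1 - c) * (p.2 - c)) ∂γ := by
        congr 1 with p; ring
    _ = _ := by
        rw [integral_sub, integral_add, integral_const_mul] <;> exact hint _ (by fun_prop)

lemma setLIntegral_jointSurvival_ne_top (hγ : ∀ᵐ p ∂γ, p ∈ Icc c d ×ˢ Icc c d) :
    ∫⁻ q in Ioi c ×ˢ Ioi c, jointSurvival γ q ≠ ∞ := by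
  rw [setLIntegral_jointSurvival_eq_ofReal hγ]
  exact ENNReal.ofReal_ne_top

end Cost

namespace IsCoupling

variable {ν₀ ν₁ : Measure ℝ} [IsProbabilityMeasure ν₀] {γ γ' : Measure (ℝ × ℝ)}

lemma integral_sq_sub_eq (h : IsCoupling γ ν₀ ν₁) {c d : ℝ} (hν₀ : ∀ᵐ x ∂ν₀, x ∈ Icc c d)
    (hν₁ : ∀ᵐ y ∂ν₁, y ∈ Icc c d) :
    ∫ p, (p.1 - p.2) ^ 2 ∂γ = ∫ x, (x - c) ^ 2 ∂ν₀ + ∫ y, (y - c) ^ 2 ∂ν₁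
      - 2 * (∫⁻ q in Ioi c ×ˢ Ioi c, jointSurvival γ q).toReal := by
  have := h.isProbabilityMeasure
  rw [_root_.integral_sq_sub_eq (h.ae_mem_prod hν₀ hν₁), ← h.1, ← h.2,
    integral_map measurable_fst.aemeasurable (by fun_prop),
    integral_map measurable_snd.aemeasurable (by fun_prop)]

lemma integral_sq_sub_le_of_jointSurvival_le (hγ : IsCoupling γ ν₀ ν₁)
    (hγ' : IsCoupling γ' ν₀ ν₁) {c d : ℝ} (hν₀ : ∀ᵐ x ∂ν₀, x ∈ Icc c d)
    (hν₁ : ∀ᵐ y ∂ν₁, y ∈ Icc c d) (hle : jointSurvival γ ≤ jointSurvival γ') :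
    ∫ p, (p.1 - p.2) ^ 2 ∂γ' ≤ ∫ p, (p.1 - p.2) ^ 2 ∂γ := by
  have := hγ'.isProbabilityMeasure
  have hmono := ENNReal.toReal_mono (setLIntegral_jointSurvival_ne_top (hγ'.ae_mem_prod hν₀ hν₁))
    (lintegral_mono fun q => hle q : ∫⁻ q in Ioi c ×ˢ Ioi c, jointSurvival γ q ≤ _)
  rw [hγ.integral_sq_sub_eq hν₀ hν₁, hγ'.integral_sq_sub_eq hν₀ hν₁]
  linarith

/-- The base point of the layer-cake formula is moved strictly below `a`, so that both couplings
live on the open quadrant where the joint survival functions are compared. -/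
lemma eq_of_jointSurvival_le_of_integral_sq_sub_le (hγ : IsCoupling γ ν₀ ν₁)
    (hγ' : IsCoupling γ' ν₀ ν₁) {a b : ℝ} (hν₀ : ∀ᵐ x ∂ν₀, x ∈ Icc a b)
    (hν₁ : ∀ᵐ y ∂ν₁, y ∈ Icc a b) (hle : jointSurvival γ ≤ jointSurvival γ')
    (hcost : ∫ p, (p.1 - p.2) ^ 2 ∂γ ≤ ∫ p, (p.1 - p.2) ^ 2 ∂γ') : γ = γ' := by
  have := hγ.isProbabilityMeasure
  have := hγ'.isProbabilityMeasure
  have hν₀' : ∀ᵐ x ∂ν₀, x ∈ Icc (a - 1) b := hν₀.mono fun x hx => ⟨by linarith [hx.1], hx.2⟩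
  have hν₁' : ∀ᵐ y ∂ν₁, y ∈ Icc (a - 1) b := hν₁.mono fun y hy => ⟨by linarith [hy.1], hy.2⟩
  have hQ : ∀ {γ}, IsCoupling γ ν₀ ν₁ → ∀ᵐ p ∂γ, p ∈ Ioi (a - 1) ×ˢ Ioi (a - 1) := fun h =>
    (h.ae_mem_prod hν₀ hν₁).mono fun p hp =>
      ⟨(sub_one_lt a).trans_le hp.1.1, (sub_one_lt a).trans_le hp.2.1⟩
  have hfin := setLIntegral_jointSurvival_ne_top (hγ.ae_mem_prod hν₀' hν₁')
  have hfin' := setLIntegral_jointSurvival_ne_top (hγ'.ae_mem_prod hν₀' hν₁')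
  rw [hγ.integral_sq_sub_eq hν₀' hν₁', hγ'.integral_sq_sub_eq hν₀' hν₁'] at hcost
  exact eq_of_jointSurvival_le_of_setLIntegral_le (hQ hγ) (hQ hγ') hle
    ((ENNReal.toReal_le_toReal hfin' hfin).1 (by linarith)) hfin

end IsCoupling

theorem stmt_18_general (a b : ℝ) (hab : a ≤ b)
    (ν₀ ν₁ : Measure ℝ) [IsProbabilityMeasure ν₀] [IsProbabilityMeasure ν₁]
    (hν₀supp : ν₀ (Set.Icc a b)ᶜ = 0) (hν₁supp : ν₁ (Set.Icc a b)ᶜ = 0)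
    (hν₀ac : ν₀ ≪ volume) :
    ∃ γ : Measure (ℝ × ℝ),
      (γ.map Prod.fst = ν₀ ∧ γ.map Prod.snd = ν₁) ∧
      (∀ γ' : Measure (ℝ × ℝ), γ'.map Prod.fst = ν₀ → γ'.map Prod.snd = ν₁ →
        ∫ p : ℝ × ℝ, (p.1 - p.2)^2 ∂γ ≤ ∫ p : ℝ × ℝ, (p.1 - p.2)^2 ∂γ') ∧
      (∃ T : ℝ → ℝ, Measurable T ∧ (∀ x ∈ Set.Icc a b, T x ∈ Set.Icc a b) ∧
        γ = ν₀.map (fun x => (x, T x))) ∧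
      (∀ γ' : Measure (ℝ × ℝ), γ'.map Prod.fst = ν₀ → γ'.map Prod.snd = ν₁ →
        (∀ γ'' : Measure (ℝ × ℝ), γ''.map Prod.fst = ν₀ → γ''.map Prod.snd = ν₁ →
          ∫ p : ℝ × ℝ, (p.1 - p.2)^2 ∂γ' ≤ ∫ p : ℝ × ℝ, (p.1 - p.2)^2 ∂γ'') →
        γ' = γ) := by
  have : NullSingletonClass ν₀ := ⟨fun _ => hν₀ac Real.volume_singleton⟩
  have hν₀ : ∀ᵐ x ∂ν₀, x ∈ Icc a b := hν₀supp
  have hν₁ : ∀ᵐ y ∂ν₁, y ∈ Icc a b := hν₁supp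
  set T := quantile a b ν₁ ∘ cdf ν₀
  have hT : Monotone T := (monotone_quantile hab).comp (monotone_cdf ν₀)
  set M := ν₀.map fun x => (x, T x)
  have hTν : ν₀.map T = ν₁ := map_quantile_cdf hab hν₁
  have hM : IsCoupling M ν₀ ν₁ := hTν ▸ isCoupling_map_graph ν₀ hT.measurable
  have hdom : ∀ γ, IsCoupling γ ν₀ ν₁ → jointSurvival γ ≤ jointSurvival M := fun γ hγ q => by
    rw [jointSurvival_map_graph ν₀ hT, hTν]
    exact hγ.jointSurvival_le q
  refine ⟨M, hM, fun γ h₀ h₁ => IsCoupling.integral_sq_sub_le_of_jointSurvival_le ⟨h₀, h₁⟩ hM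
    hν₀ hν₁ (hdom γ ⟨h₀, h₁⟩), ⟨T, hT.measurable, fun x _ => quantile_mem_Icc hab _, rfl⟩,
    fun γ h₀ h₁ hopt => ?_⟩
  exact IsCoupling.eq_of_jointSurvival_le_of_integral_sq_sub_le ⟨h₀, h₁⟩ hM hν₀ hν₁
    (hdom γ ⟨h₀, h₁⟩) (hopt M hM.1 hM.2)

/-- One-dimensional Brenier-type theorem: for absolutely continuous probability
measures on a compact interval and the quadratic cost, there is a unique optimal
plan and it is induced by a Borel map. -/
theorem stmt_18 (a b : ℝ) (hab : a ≤ b)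
    (ν₀ ν₁ : Measure ℝ) [IsProbabilityMeasure ν₀] [IsProbabilityMeasure ν₁]
    (hν₀supp : ν₀ (Set.Icc a b)ᶜ = 0) (hν₁supp : ν₁ (Set.Icc a b)ᶜ = 0)
    (hν₀ac : ν₀ ≪ volume) (hν₁ac : ν₁ ≪ volume) :
    ∃ γ : Measure (ℝ × ℝ),
      (γ.map Prod.fst = ν₀ ∧ γ.map Prod.snd = ν₁) ∧
      (∀ γ' : Measure (ℝ × ℝ), γ'.map Prod.fst = ν₀ → γ'.map Prod.snd = ν₁ →
        ∫ p : ℝ × ℝ, (p.1 - p.2)^2 ∂γ ≤ ∫ p : ℝ × ℝ, (p.1 - p.2)^2 ∂γ') ∧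
      (∃ T : ℝ → ℝ, Measurable T ∧ (∀ x ∈ Set.Icc a b, T x ∈ Set.Icc a b) ∧
        γ = ν₀.map (fun x => (x, T x))) ∧
      (∀ γ' : Measure (ℝ × ℝ), γ'.map Prod.fst = ν₀ → γ'.map Prod.snd = ν₁ →
        (∀ γ'' : Measure (ℝ × ℝ), γ''.map Prod.fst = ν₀ → γ''.map Prod.snd = ν₁ →
          ∫ p : ℝ × ℝ, (p.1 - p.2)^2 ∂γ' ≤ ∫ p : ℝ × ℝ, (p.1 - p.2)^2 ∂γ'') →
        γ' = γ) :=
  stmt_18_general a b hab ν₀ ν₁ hν₀supp hν₁supp hν₀ac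
end
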